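/- arXiv:math/0403072 — 4 statements merged into one kernel-verified Lean document; each statement's English description precedes it below -/
import Mathlib

section
/- Let $\tau, \eta \in \mathbb{Z}^n$, $w \in S_n$, and suppose $\eta - \tau \in \mathbb{Z}\alpha^\vee$ for some positive root $\alpha = \varepsilon_i - \varepsilon_j$ ($i < j$) of $S_n$, and that $w\alpha$ is a positive root. Then $\tau \le \eta$ in the Bruhat order on $\mathbb{Z}^n$ if and only if $w\tau \le w\eta$. -/
/-- An element `t_τ ∘ u` of the extended affine Weyl group `W = Sₙ ⋉ ℤⁿ`
of type `A_{n-1}`:  `perm` is the finite part `u ∈ Sₙ`, `tr` the translation `τ`. -/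
structure AffW (n : ℕ) where
  perm : Equiv.Perm (Fin n)
  tr : Fin n → ℤ

namespace AffW

variable {n : ℕ}

/-- The affine action on `X = ℤⁿ` : `(t_τ u)(x) = u·x + τ` where `(u·x)_i = x_{u⁻¹ i}`. -/
def act (w : AffW n) (x : Fin n → ℤ) : Fin n → ℤ :=
  fun i => x (w.perm⁻¹ i) + w.tr i

/-- Group multiplication (composition of affine maps). -/
def mul (a b : AffW n) : AffW n :=
  ⟨a.perm * b.perm, fun i => b.tr (a.perm⁻¹ i) + a.tr i⟩

def one (n : ℕ) : AffW n := ⟨1, 0⟩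

/-- An affine root `ε_i - ε_j + k`, recorded as the data `(i, j, k)`. -/
abbrev Root (n : ℕ) := Fin n × Fin n × ℤ

/-- A positive affine root: `Δ⁺ = Δ_f⁺ ∪ (Δ_f + ℤ_{>0})`. -/
def IsPos (α : Root n) : Prop := 0 < α.2.2 ∨ (α.2.2 = 0 ∧ α.1 < α.2.1)

/-- A negative affine root. -/
def IsNeg (α : Root n) : Prop := IsPos (α.2.1, α.1, -α.2.2)

/-- Action of `w` on affine roots, determined by `(wα)(x) = α(w⁻¹x)`. -/
def rootAct (w : AffW n) (α : Root n) : Root n :=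
  (w.perm α.1, w.perm α.2.1, α.2.2 - w.tr (w.perm α.1) + w.tr (w.perm α.2.1))

/-- The length `ℓ(w) = #{α ∈ Δ⁺ ∣ wα ∈ -Δ⁺}`. -/
noncomputable def len (w : AffW n) : ℕ :=
  Set.ncard {α : Root n | IsPos α ∧ IsNeg (rootAct w α)}

/-- The affine reflection `s_{ε_i - ε_j + k}` as an element of `W`. -/
def refl (i j : Fin n) (k : ℤ) : AffW n :=
  ⟨Equiv.swap i j, fun m => if m = i then -k else if m = j then k else 0⟩

/-- Bruhat covering-type relation: right multiplication by a reflection which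
increases the length. -/
def BruhatStep (a b : AffW n) : Prop :=
  (∃ i j k, i ≠ j ∧ b = mul a (refl i j k)) ∧ len a < len b

/-- The Bruhat order on the extended affine Weyl group. -/
def BruhatLe : AffW n → AffW n → Prop := Relation.ReflTransGen BruhatStep

/-- `m_τ`, the shortest element of the coset `t_τ Sₙ`. -/
noncomputable def minRep (τ : Fin n → ℤ) : AffW n :=
  ⟨(Finset.exists_min_image (Finset.univ : Finset (Equiv.Perm (Fin n)))
      (fun u => len (⟨u, τ⟩ : AffW n)) ⟨1, Finset.mem_univ 1⟩).choose, τ⟩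

/-- The Bruhat order on `X = ℤⁿ` induced from the extended affine Weyl group:
`τ ≤ η ↔ m_τ ≤ m_η`. -/
noncomputable def XLe (τ η : Fin n → ℤ) : Prop := BruhatLe (minRep τ) (minRep η)

end AffW

/-!
With `N = η i - η j = ⟨η, α⟩`, one has `η - kα^∨ ≤ η` iff `0 ≤ k < N` or `N ≤ k ≤ 0`. This
condition only involves `N` and the sign of `α`, and both are unchanged when `η, α` are replaced by
`wη, wα` with `wα > 0`.

If `k` is in this range, then `m_η s_β` with `β = m_η⁻¹α + k` lies in the coset `t_τ Sₙ` and is a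
Bruhat step below `m_η`, while `m_τ` lies below its whole coset. Conversely, by the length
criterion `ℓ(a s_β) > ℓ(a) ↔ (β > 0 ↔ aβ > 0)` a Bruhat step moves two coordinates of the
translation part apart, so it increases every `∑ₘ max 0 (xₘ - S)`. This confines `τ i, τ j` to
the interval between `η j` and `η i`; the endpoint `τ = s_α η` for `N > 0` is excluded by
antisymmetry, since then also `η ≤ τ`.

The length criterion follows from `ℓ(ab) = |N(a) \ N(b⁻¹)| + |N(b⁻¹) \ N(a)|` for inversion
sets `N`, together with an injection of `N(a) ∩ N(s_β)` into `N(s_β) \ N(a)` that misses `β`;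
signs of roots are read off a height function.
-/

lemma Fintype.sum_sub_sum_eq_of_eq_off_pair {ι M : Type*} [Fintype ι] [AddCommGroup M]
    (f g : ι → M) {I J : ι} (hIJ : I ≠ J) (h : ∀ m, m ≠ I → m ≠ J → g m = f m) :
    ∑ m, g m - ∑ m, f m = (g I - f I) + (g J - f J) := by
  rw [← Finset.sum_sub_distrib, Fintype.sum_eq_add I J hIJ fun m hm => by
    rw [h m hm.1 hm.2, sub_self]]

namespace AffW

variable {n : ℕ}

@[ext]
lemma ext {a b : AffW n} (hperm : a.perm = b.perm) (htr : a.tr = b.tr) : a = b := by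
  cases a; cases b; cases hperm; cases htr; rfl

/-! ### Affine roots -/

/-- The root `-γ` (in Lean `-γ` would be the componentwise negation on `Fin n × Fin n × ℤ`). -/
def negRoot (γ : Root n) : Root n := (γ.2.1, γ.1, -γ.2.2)

@[simp]
lemma isPos_mk {P Q : Fin n} {K : ℤ} : IsPos ((P, Q, K) : Root n) ↔ 0 < K ∨ K = 0 ∧ P < Q :=
  Iff.rfl

@[simp]
lemma isNeg_mk {P Q : Fin n} {K : ℤ} : IsNeg ((P, Q, K) : Root n) ↔ K < 0 ∨ K = 0 ∧ Q < P := by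
  simp only [IsNeg, isPos_mk, neg_pos, neg_eq_zero]

lemma isPos_negRoot {γ : Root n} : IsPos (negRoot γ) ↔ IsNeg γ := Iff.rfl

lemma isNeg_negRoot {γ : Root n} : IsNeg (negRoot γ) ↔ IsPos γ := by
  obtain ⟨P, Q, K⟩ := γ
  simp only [negRoot, isNeg_mk, isPos_mk]
  omega

@[simp]
lemma negRoot_negRoot (γ : Root n) : negRoot (negRoot γ) = γ := by
  simp [negRoot]

lemma negRoot_injective : Function.Injective (negRoot (n := n)) :=
  Function.LeftInverse.injective negRoot_negRoot

lemma not_isPos_and_isNeg (γ : Root n) : ¬ (IsPos γ ∧ IsNeg γ) := by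
  obtain ⟨P, Q, K⟩ := γ
  simp only [isPos_mk, isNeg_mk]
  omega

lemma isPos_or_isNeg {γ : Root n} (h : γ.1 ≠ γ.2.1) : IsPos γ ∨ IsNeg γ := by
  obtain ⟨P, Q, K⟩ := γ
  simp only [ne_eq, isPos_mk, isNeg_mk] at h ⊢
  omega

lemma isNeg_iff_not_isPos {γ : Root n} (h : γ.1 ≠ γ.2.1) : IsNeg γ ↔ ¬ IsPos γ :=
  ⟨fun hn hp => not_isPos_and_isNeg γ ⟨hp, hn⟩, (isPos_or_isNeg h).resolve_left⟩

lemma rootAct_mk (a : AffW n) (P Q : Fin n) (K : ℤ) :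
    rootAct a (P, Q, K) = (a.perm P, a.perm Q, K - a.tr (a.perm P) + a.tr (a.perm Q)) :=
  rfl

lemma rootAct_fst_ne_snd (a : AffW n) {γ : Root n} (h : γ.1 ≠ γ.2.1) :
    (rootAct a γ).1 ≠ (rootAct a γ).2.1 :=
  a.perm.injective.ne h

lemma rootAct_negRoot (a : AffW n) (γ : Root n) :
    rootAct a (negRoot γ) = negRoot (rootAct a γ) := by
  obtain ⟨P, Q, K⟩ := γ
  simp only [negRoot, rootAct_mk, Prod.mk.injEq, true_and]
  ring

lemma rootAct_mul (a b : AffW n) (γ : Root n) :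
    rootAct (mul a b) γ = rootAct a (rootAct b γ) := by
  obtain ⟨P, Q, K⟩ := γ
  simp only [rootAct_mk, mul, Equiv.Perm.mul_apply, Equiv.Perm.coe_inv, Equiv.symm_apply_apply,
    Prod.mk.injEq, true_and]
  ring

def inv (a : AffW n) : AffW n := ⟨a.perm⁻¹, fun m => -a.tr (a.perm m)⟩

@[simp]
lemma rootAct_inv_rootAct (a : AffW n) (γ : Root n) : rootAct (inv a) (rootAct a γ) = γ := by
  obtain ⟨P, Q, K⟩ := γ
  simp only [rootAct_mk, inv, Equiv.Perm.coe_inv, Equiv.symm_apply_apply, Prod.mk.injEq,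
    true_and]
  ring

@[simp]
lemma rootAct_rootAct_inv (a : AffW n) (γ : Root n) : rootAct a (rootAct (inv a) γ) = γ := by
  obtain ⟨P, Q, K⟩ := γ
  simp only [rootAct_mk, inv, Equiv.Perm.coe_inv, Equiv.apply_symm_apply, Prod.mk.injEq,
    true_and]
  ring

lemma rootAct_injective (a : AffW n) : Function.Injective (rootAct a) :=
  Function.LeftInverse.injective (rootAct_inv_rootAct a)

/-! ### Length -/

def invSet (a : AffW n) : Set (Root n) := {γ | IsPos γ ∧ IsNeg (rootAct a γ)}

lemma len_eq_ncard_invSet (a : AffW n) : len a = (invSet a).ncard := rfl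

lemma fst_ne_snd_of_mem_invSet {a : AffW n} {γ : Root n} (h : γ ∈ invSet a) :
    γ.1 ≠ γ.2.1 := by
  obtain ⟨P, Q, K⟩ := γ
  rintro (rfl : P = Q)
  obtain ⟨h1, h2⟩ := h
  simp only [isPos_mk, lt_self_iff_false, and_false, or_false, rootAct_mk, isNeg_mk] at h1 h2
  omega

lemma invSet_finite (a : AffW n) : (invSet a).Finite := by
  obtain ⟨B, hB⟩ := (Set.finite_range fun x : Fin n × Fin n => a.tr x.1 - a.tr x.2).bddAbove
  refine (Set.finite_univ.prod (Set.finite_univ.prod (Set.finite_Icc 0 B))).subset ?_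
  rintro ⟨P, Q, K⟩ ⟨h1, h2⟩
  have hPQ := hB ⟨(a.perm P, a.perm Q), rfl⟩
  simp only [isPos_mk, rootAct_mk, isNeg_mk] at h1 h2 hPQ
  simp only [Set.mem_prod, Set.mem_univ, Set.mem_Icc, true_and]
  omega

lemma invSet_mul (a b : AffW n) :
    invSet (mul a b) = rootAct (inv b) '' (invSet a \ invSet (inv b)) ∪
      (fun δ => negRoot (rootAct (inv b) δ)) '' (invSet (inv b) \ invSet a) := by
  ext γ
  constructor
  · intro hγ
    have hne := rootAct_fst_ne_snd b (fst_ne_snd_of_mem_invSet hγ)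
    obtain ⟨hpos, habγ⟩ := hγ
    rw [rootAct_mul] at habγ
    rcases isPos_or_isNeg hne with hbγ | hbγ
    · refine Or.inl ⟨rootAct b γ, ⟨⟨hbγ, habγ⟩, fun h => ?_⟩, rootAct_inv_rootAct b γ⟩
      exact not_isPos_and_isNeg γ ⟨hpos, by simpa using h.2⟩
    · refine Or.inr ⟨negRoot (rootAct b γ), ⟨⟨isPos_negRoot.2 hbγ, ?_⟩, fun h => ?_⟩, ?_⟩
      · rwa [rootAct_negRoot, rootAct_inv_rootAct, isNeg_negRoot]
      · have h' := h.2
        rw [rootAct_negRoot, isNeg_negRoot] at h'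
        exact not_isPos_and_isNeg _ ⟨h', habγ⟩
      · simp [rootAct_negRoot]
  · rintro (⟨δ, ⟨⟨hδ, haδ⟩, hbδ⟩, rfl⟩ | ⟨δ, ⟨⟨hδ, hbδ⟩, haδ⟩, rfl⟩)
    · refine ⟨?_, by rwa [rootAct_mul, rootAct_rootAct_inv]⟩
      have hne := rootAct_fst_ne_snd (inv b) (fst_ne_snd_of_mem_invSet ⟨hδ, haδ⟩)
      exact (isPos_or_isNeg hne).resolve_right fun h => hbδ ⟨hδ, h⟩
    · refine ⟨isPos_negRoot.2 hbδ, ?_⟩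
      rw [rootAct_mul, rootAct_negRoot, rootAct_rootAct_inv, rootAct_negRoot, isNeg_negRoot]
      have hne := rootAct_fst_ne_snd a (fst_ne_snd_of_mem_invSet ⟨hδ, hbδ⟩)
      exact (isPos_or_isNeg hne).resolve_right fun h => haδ ⟨hδ, h⟩

lemma len_mul (a b : AffW n) :
    len (mul a b) = (invSet a \ invSet (inv b)).ncard + (invSet (inv b) \ invSet a).ncard := by
  have hdisj : Disjoint (rootAct (inv b) '' (invSet a \ invSet (inv b)))
      ((fun δ => negRoot (rootAct (inv b) δ)) '' (invSet (inv b) \ invSet a)) := by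
    rw [Set.disjoint_left]
    rintro _ ⟨δ, ⟨⟨hδ, -⟩, -⟩, rfl⟩ ⟨δ', ⟨⟨hδ', -⟩, -⟩, hδδ'⟩
    have h := congrArg (fun γ => negRoot (rootAct b γ)) hδδ'
    simp only [rootAct_rootAct_inv, rootAct_negRoot, negRoot_negRoot] at h
    exact not_isPos_and_isNeg δ ⟨hδ, isPos_negRoot.1 (h ▸ hδ')⟩
  rw [len_eq_ncard_invSet, invSet_mul, Set.ncard_union_eq hdisj
      (((invSet_finite a).sdiff).image _) (((invSet_finite _).sdiff).image _),
    Set.ncard_image_of_injective _ (rootAct_injective _),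
    Set.ncard_image_of_injective _ (show Function.Injective fun δ => negRoot (rootAct (inv b) δ)
      from negRoot_injective.comp (rootAct_injective _))]

def vec (γ : Root n) : (Fin n → ℤ) × ℤ := (Pi.single γ.1 1 - Pi.single γ.2.1 1, γ.2.2)

def linAct (a : AffW n) : ((Fin n → ℤ) × ℤ) →ₗ[ℤ] (Fin n → ℤ) × ℤ where
  toFun v := (fun m => v.1 (a.perm⁻¹ m), v.2 - ∑ m, a.tr m * v.1 (a.perm⁻¹ m))
  map_add' v w := by
    ext <;> simp only [Prod.fst_add, Prod.snd_add, Pi.add_apply, mul_add, Finset.sum_add_distrib]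
    ring
  map_smul' c v := by
    ext <;> simp only [Prod.smul_fst, Prod.smul_snd, Pi.smul_apply, smul_eq_mul, RingHom.id_apply,
      Prod.smul_mk, mul_left_comm _ c, ← Finset.mul_sum]
    ring

/-- As `|Q - P| < n + 1`, the height of `ε_P - ε_Q + K` has the sign of `K`, or of `Q - P` when
`K = 0`. -/
def height : ((Fin n → ℤ) × ℤ) →ₗ[ℤ] ℤ where
  toFun v := (n + 1) * v.2 - ∑ m : Fin n, ((m : ℕ) : ℤ) * v.1 m
  map_add' v w := by
    simp only [Prod.fst_add, Prod.snd_add, Pi.add_apply, mul_add, Finset.sum_add_distrib]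
    ring
  map_smul' c v := by
    simp only [Prod.smul_fst, Prod.smul_snd, Pi.smul_apply, smul_eq_mul, RingHom.id_apply,
      mul_left_comm _ c, ← Finset.mul_sum]
    ring

lemma height_vec (P Q : Fin n) (K : ℤ) :
    height (vec ((P, Q, K) : Root n)) = (n + 1) * K + ((Q : ℤ) - P) := by
  simp [height, vec, mul_sub, Finset.sum_sub_distrib, Pi.single_apply]
  ring

lemma isPos_iff_height_pos (γ : Root n) : IsPos γ ↔ 0 < height (vec γ) := by
  obtain ⟨P, Q, K⟩ := γ
  have hP := P.isLt
  have hQ := Q.isLt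
  rw [height_vec, isPos_mk, Fin.lt_def]
  rcases lt_trichotomy K 0 with hK | rfl | hK
  · have : (n + 1 : ℤ) * K ≤ -(n + 1) := by nlinarith
    omega
  · omega
  · have : (n + 1 : ℤ) ≤ (n + 1) * K := by nlinarith
    omega

lemma vec_negRoot (γ : Root n) : vec (negRoot γ) = -vec γ := by
  ext <;> simp [vec, negRoot]

lemma isNeg_iff_height_neg (γ : Root n) : IsNeg γ ↔ height (vec γ) < 0 := by
  rw [← isPos_negRoot, isPos_iff_height_pos, vec_negRoot, map_neg, neg_pos]

lemma vec_rootAct (a : AffW n) (γ : Root n) : vec (rootAct a γ) = linAct a (vec γ) := by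
  obtain ⟨P, Q, K⟩ := γ
  ext m
  · simp [vec, linAct, rootAct_mk, Pi.single_apply, Equiv.symm_apply_eq]
  · simp [vec, linAct, rootAct_mk, Pi.single_apply, Equiv.symm_apply_eq, mul_sub,
      Finset.sum_sub_distrib]
    ring

lemma mul_refl_tr (a : AffW n) (p q : Fin n) (c : ℤ) :
    (mul a (refl p q c)).tr =
      fun m => a.tr m + if m = a.perm p then -c else if m = a.perm q then c else 0 := by
  funext m
  simp only [mul, refl, Equiv.Perm.inv_eq_iff_eq]
  ring

lemma mul_refl_refl (a : AffW n) {p q : Fin n} (hpq : p ≠ q) (c : ℤ) :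
    mul (mul a (refl p q c)) (refl p q c) = a := by
  have hne : a.perm p ≠ a.perm q := a.perm.injective.ne hpq
  ext m
  · simp [mul, refl, mul_assoc]
  · rw [mul_refl_tr, mul_refl_tr]
    simp only [mul, refl, Equiv.Perm.mul_apply, Equiv.swap_apply_left, Equiv.swap_apply_right]
    split_ifs <;> simp_all

lemma inv_refl {p q : Fin n} (hpq : p ≠ q) (c : ℤ) : inv (refl p q c) = refl p q c := by
  ext m
  · simp [inv, refl]
  · simp only [inv, refl, Equiv.swap_apply_def]
    split_ifs <;> simp_all

lemma refl_comm {p q : Fin n} (hpq : p ≠ q) (c : ℤ) : refl q p (-c) = refl p q c := by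
  ext m
  · simp [refl, Equiv.swap_comm]
  · simp only [refl]
    split_ifs <;> simp_all

lemma rootAct_refl_self {p q : Fin n} (hpq : p ≠ q) (c : ℤ) :
    rootAct (refl p q c) (p, q, c) = negRoot (p, q, c) := by
  simp only [rootAct_mk, refl, negRoot, Equiv.swap_apply_left, Equiv.swap_apply_right,
    if_neg hpq.symm, if_true, Prod.mk.injEq, true_and]
  ring

lemma linAct_refl {p q : Fin n} (hpq : p ≠ q) (c : ℤ) (v : (Fin n → ℤ) × ℤ) :
    linAct (refl p q c) v = v - (v.1 p - v.1 q) • vec (p, q, c) := by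
  ext m
  · simp only [linAct, refl, LinearMap.coe_mk, AddHom.coe_mk, Equiv.swap_inv, vec, Prod.fst_sub,
      Prod.smul_fst, Pi.sub_apply, Pi.smul_apply, Pi.single_apply, smul_eq_mul,
      Equiv.swap_apply_def]
    split_ifs <;> simp_all
  · have hsum : ∑ m, (refl p q c).tr m * v.1 ((refl p q c).perm⁻¹ m) = c * (v.1 p - v.1 q) := by
      rw [Fintype.sum_eq_add p q hpq fun m hm => by simp [refl, hm.1, hm.2]]
      simp [refl, hpq.symm]
      ring
    simp only [linAct, LinearMap.coe_mk, AddHom.coe_mk, hsum, vec, Prod.snd_sub, Prod.smul_snd,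
      smul_eq_mul]
    ring

lemma rootAct_refl_rootAct_refl {p q : Fin n} (hpq : p ≠ q) (c : ℤ) (γ : Root n) :
    rootAct (refl p q c) (rootAct (refl p q c) γ) = γ := by
  simpa only [inv_refl hpq] using rootAct_inv_rootAct (refl p q c) γ

lemma one_le_pairing_of_mem_invSet_refl {p q : Fin n} (hpq : p ≠ q) {c : ℤ}
    (hβ : IsPos ((p, q, c) : Root n)) {γ : Root n} (hγ : γ ∈ invSet (refl p q c)) :
    1 ≤ (vec γ).1 p - (vec γ).1 q := by
  obtain ⟨hγpos, hγneg⟩ := hγ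
  rw [isPos_iff_height_pos] at hβ hγpos
  rw [isNeg_iff_height_neg, vec_rootAct, linAct_refl hpq, map_sub, map_smul, smul_eq_mul] at hγneg
  by_contra! h
  nlinarith

/-- `a(-s_β γ) = ⟨γ, β^∨⟩ aβ - aγ` has positive height. -/
lemma isPos_rootAct_negRoot_rootAct_refl (a : AffW n) {p q : Fin n} (hpq : p ≠ q) {c : ℤ}
    (hβ : IsPos ((p, q, c) : Root n)) (haβ : IsPos (rootAct a (p, q, c)))
    {γ : Root n} (hγ : γ ∈ invSet (refl p q c)) (haγ : IsNeg (rootAct a γ)) :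
    IsPos (rootAct a (negRoot (rootAct (refl p q c) γ))) := by
  have hd := one_le_pairing_of_mem_invSet_refl hpq hβ hγ
  rw [isPos_iff_height_pos, vec_rootAct] at haβ ⊢
  rw [isNeg_iff_height_neg, vec_rootAct] at haγ
  rw [vec_negRoot, vec_rootAct, linAct_refl hpq, map_neg, map_sub, map_smul, map_neg, map_sub,
    map_smul, smul_eq_mul]
  nlinarith

/-- `γ ↦ -s_β γ` injects the left-hand set into the right-hand one, missing `β`. -/
lemma ncard_invSet_inter_lt {a : AffW n} {p q : Fin n} (hpq : p ≠ q) {c : ℤ}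
    (hβ : IsPos ((p, q, c) : Root n)) (haβ : IsPos (rootAct a (p, q, c))) :
    (invSet a ∩ invSet (refl p q c)).ncard < (invSet (refl p q c) \ invSet a).ncard := by
  set φ : Root n → Root n := fun γ => negRoot (rootAct (refl p q c) γ)
  have hφφ (γ : Root n) : φ (φ γ) = γ := by
    simp only [φ, rootAct_negRoot, negRoot_negRoot, rootAct_refl_rootAct_refl hpq]
  have hβ_mem : ((p, q, c) : Root n) ∈ invSet (refl p q c) \ invSet a := by
    refine ⟨⟨hβ, ?_⟩, fun h => not_isPos_and_isNeg _ ⟨haβ, h.2⟩⟩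
    rwa [rootAct_refl_self hpq, isNeg_negRoot]
  have hsub : φ '' (invSet a ∩ invSet (refl p q c)) ⊆ invSet (refl p q c) \ invSet a := by
    rintro _ ⟨γ, ⟨haγ, hrγ⟩, rfl⟩
    refine ⟨⟨isPos_negRoot.2 hrγ.2, ?_⟩, fun h => not_isPos_and_isNeg _ ⟨?_, h.2⟩⟩
    · rw [rootAct_negRoot, rootAct_refl_rootAct_refl hpq, isNeg_negRoot]
      exact hrγ.1
    · exact isPos_rootAct_negRoot_rootAct_refl a hpq hβ haβ hrγ haγ.2
  have hβ_not : ((p, q, c) : Root n) ∉ φ '' (invSet a ∩ invSet (refl p q c)) := by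
    rintro ⟨γ, ⟨haγ, -⟩, hγ⟩
    have hφβ : φ (p, q, c) = (p, q, c) := by
      simp only [φ, rootAct_refl_self hpq, negRoot_negRoot]
    rw [← hγ, hφφ, hγ] at hφβ
    exact hβ_mem.2 (hφβ ▸ haγ)
  rw [← Set.ncard_image_of_injective _ (Function.LeftInverse.injective hφφ)]
  exact Set.ncard_lt_ncard ((Set.ssubset_iff_of_subset hsub).2 ⟨_, hβ_mem, hβ_not⟩)
    ((invSet_finite _).sdiff)

lemma len_lt_len_mul_refl (a : AffW n) {p q : Fin n} (hpq : p ≠ q) {c : ℤ}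
    (hβ : IsPos ((p, q, c) : Root n)) (haβ : IsPos (rootAct a (p, q, c))) :
    len a < len (mul a (refl p q c)) := by
  rw [len_mul, inv_refl hpq, len_eq_ncard_invSet,
    ← Set.ncard_inter_add_ncard_sdiff_eq_ncard (invSet a) (invSet (refl p q c)) (invSet_finite a)]
  have := ncard_invSet_inter_lt hpq hβ haβ
  omega

lemma len_mul_refl_lt_of_isNeg_rootAct (a : AffW n) {p q : Fin n} (hpq : p ≠ q) {c : ℤ}
    (hβ : IsPos ((p, q, c) : Root n)) (haβ : IsNeg (rootAct a (p, q, c))) :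
    len (mul a (refl p q c)) < len a := by
  have hlt := len_lt_len_mul_refl (mul a (refl p q c)) hpq hβ (by
    rwa [rootAct_mul, rootAct_refl_self hpq, rootAct_negRoot, isPos_negRoot])
  rwa [mul_refl_refl a hpq] at hlt

lemma len_mul_refl_lt (a : AffW n) {p q : Fin n} (hpq : p ≠ q) {c : ℤ}
    (h : IsPos ((p, q, c) : Root n) ↔ IsNeg (rootAct a (p, q, c))) :
    len (mul a (refl p q c)) < len a := by
  by_cases hβ : IsPos ((p, q, c) : Root n)
  · exact len_mul_refl_lt_of_isNeg_rootAct a hpq hβ (h.1 hβ)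
  · have haβ : IsPos (rootAct a (p, q, c)) := by
      by_contra hn
      exact hβ (h.2 ((isNeg_iff_not_isPos (rootAct_fst_ne_snd a (γ := (p, q, c)) hpq)).2 hn))
    rw [← refl_comm hpq]
    have hneg : ((q, p, -c) : Root n) = negRoot (p, q, c) := rfl
    refine len_mul_refl_lt_of_isNeg_rootAct a hpq.symm ?_ ?_
    · rw [hneg, isPos_negRoot]
      exact (isNeg_iff_not_isPos (γ := (p, q, c)) hpq).2 hβ
    · rwa [hneg, rootAct_negRoot, isNeg_negRoot]

/-! ### Bruhat order -/

lemma isPos_iff_isPos_rootAct_of_len_lt (a : AffW n) {p q : Fin n} (hpq : p ≠ q) {c : ℤ}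
    (h : len a < len (mul a (refl p q c))) :
    IsPos ((p, q, c) : Root n) ↔ IsPos (rootAct a (p, q, c)) := by
  by_contra hne
  refine (len_mul_refl_lt a hpq ?_).not_gt h
  rw [isNeg_iff_not_isPos (rootAct_fst_ne_snd a (γ := (p, q, c)) hpq)]
  exact iff_not_comm.2 (not_iff.1 hne).symm

def excess (x : Fin n → ℤ) (S : ℤ) : ℤ := ∑ m, max 0 (x m - S)

/-- A Bruhat step moves two coordinates of the translation part apart. -/
lemma BruhatStep.excess_le {a b : AffW n} (h : BruhatStep a b) (S : ℤ) :
    excess a.tr S ≤ excess b.tr S := by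
  obtain ⟨⟨p, q, c, hpq, rfl⟩, hlen⟩ := h
  have hsign := isPos_iff_isPos_rootAct_of_len_lt a hpq hlen
  have hIJ : a.perm p ≠ a.perm q := a.perm.injective.ne hpq
  simp only [isPos_mk, rootAct_mk] at hsign
  rw [← sub_nonneg, excess, excess, Fintype.sum_sub_sum_eq_of_eq_off_pair _ _ hIJ
    fun m h1 h2 => by simp [mul_refl_tr, h1, h2]]
  simp only [mul_refl_tr, if_true, if_neg hIJ.symm]
  omega

lemma BruhatLe.excess_le {a b : AffW n} (h : BruhatLe a b) (S : ℤ) :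
    excess a.tr S ≤ excess b.tr S := by
  induction h with
  | refl => exact le_rfl
  | tail _ hstep ih => exact ih.trans (hstep.excess_le S)

lemma BruhatLe.eq_or_len_lt {a b : AffW n} (h : BruhatLe a b) : a = b ∨ len a < len b := by
  induction h with
  | refl => exact Or.inl rfl
  | tail _ hstep ih =>
    rcases ih with rfl | ih
    · exact Or.inr hstep.2
    · exact Or.inr (ih.trans hstep.2)

lemma BruhatLe.antisymm {a b : AffW n} (hab : BruhatLe a b) (hba : BruhatLe b a) : a = b := by
  rcases hab.eq_or_len_lt with h | h
  · exact h
  rcases hba.eq_or_len_lt with h' | h'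
  · exact h'.symm
  · omega

/-! ### Minimal coset representatives -/

/-- Sorting key: `m_τ` lists the coordinates of `τ` increasingly, ties broken by position. -/
def key (τ : Fin n → ℤ) (x : Fin n) : ℤ ×ₗ Fin n := toLex (τ x, x)

lemma key_injective (τ : Fin n → ℤ) : Function.Injective (key τ) :=
  fun _ _ h => congrArg Prod.snd (toLex.injective h)

lemma isNeg_rootAct_iff_key_lt (τ : Fin n → ℤ) (v : Equiv.Perm (Fin n)) (P Q : Fin n) :
    IsNeg (rootAct ⟨v, τ⟩ (P, Q, 0)) ↔ key τ (v Q) < key τ (v P) := by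
  simp only [rootAct_mk, isNeg_mk, key, Prod.Lex.toLex_lt_toLex]
  omega

lemma bruhatStep_mul_swap {τ : Fin n → ℤ} {v : Equiv.Perm (Fin n)} {P Q : Fin n} (hPQ : P < Q)
    (h : key τ (v Q) < key τ (v P)) : BruhatStep ⟨v * Equiv.swap P Q, τ⟩ ⟨v, τ⟩ := by
  have hmul : mul ⟨v, τ⟩ (refl P Q 0) = ⟨v * Equiv.swap P Q, τ⟩ := by
    ext m <;> simp [mul, refl]
  rw [← hmul]
  refine ⟨⟨P, Q, 0, hPQ.ne, (mul_refl_refl _ hPQ.ne 0).symm⟩, len_mul_refl_lt _ hPQ.ne ?_⟩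
  rw [isNeg_rootAct_iff_key_lt]
  exact iff_of_true (by simpa using hPQ) h

lemma exists_key_lt_of_not_strictMono {τ : Fin n → ℤ} {v : Equiv.Perm (Fin n)}
    (h : ¬ StrictMono (key τ ∘ v)) : ∃ P Q, P < Q ∧ key τ (v Q) < key τ (v P) := by
  simp only [StrictMono, not_forall, not_lt, Function.comp_apply] at h
  obtain ⟨P, Q, hPQ, hle⟩ := h
  exact ⟨P, Q, hPQ, hle.lt_of_ne (((key_injective τ).comp v.injective).ne hPQ.ne')⟩

lemma eq_of_strictMono_key {τ : Fin n → ℤ} {v w : Equiv.Perm (Fin n)}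
    (hv : StrictMono (key τ ∘ v)) (hw : StrictMono (key τ ∘ w)) : v = w := by
  have hrange : Set.range (key τ ∘ v) = Set.range (key τ ∘ w) := by
    simp only [Set.range_comp, Equiv.range_eq_univ]
  have hvw := (hv.range_inj hw).1 hrange
  exact Equiv.ext fun x => key_injective τ (congrFun hvw x)

lemma len_minRep_le (τ : Fin n → ℤ) (v : Equiv.Perm (Fin n)) :
    len (minRep τ) ≤ len ⟨v, τ⟩ :=
  (Finset.exists_min_image Finset.univ (fun u => len (⟨u, τ⟩ : AffW n))
    ⟨1, Finset.mem_univ 1⟩).choose_spec.2 v (Finset.mem_univ v)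

lemma strictMono_key_minRep (τ : Fin n → ℤ) : StrictMono (key τ ∘ (minRep τ).perm) := by
  by_contra h
  obtain ⟨P, Q, hPQ, hlt⟩ := exists_key_lt_of_not_strictMono h
  exact (bruhatStep_mul_swap hPQ hlt).2.not_ge (len_minRep_le τ _)

/-- Swapping an inverted pair is a Bruhat step down, and `m_τ` is the only sorted element of
the coset. -/
lemma minRep_le (τ : Fin n → ℤ) (v : Equiv.Perm (Fin n)) : BruhatLe (minRep τ) ⟨v, τ⟩ := by
  induction hlen : len (⟨v, τ⟩ : AffW n) using Nat.strong_induction_on generalizing v with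
  | _ N ih =>
    by_cases hv : StrictMono (key τ ∘ v)
    · rw [eq_of_strictMono_key hv (strictMono_key_minRep τ)]
      exact Relation.ReflTransGen.refl
    · obtain ⟨P, Q, hPQ, hlt⟩ := exists_key_lt_of_not_strictMono hv
      have hstep := bruhatStep_mul_swap hPQ hlt
      exact (ih _ (hlen ▸ hstep.2) _ rfl).tail hstep

/-! ### Strings `η + ℤα^∨` -/

/-- `τ` is the translation part of `m_η s_β` for `β = m_η⁻¹(ε_i - ε_j) + k`, a Bruhat step
below `m_η`. -/
lemma xle_of_mem_string {τ η : Fin n → ℤ} {i j : Fin n} {k : ℤ} (hij : i < j)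
    (hline : τ = fun m => η m - k * ((if m = i then 1 else 0) - (if m = j then 1 else 0)))
    (hk : (0 ≤ k ∧ k < η i - η j) ∨ (η i - η j ≤ k ∧ k ≤ 0)) : XLe τ η := by
  subst hline
  rcases eq_or_ne k 0 with rfl | hk0
  · simp only [zero_mul, sub_zero]
    exact Relation.ReflTransGen.refl
  set a := minRep η
  have hatr : a.tr = η := rfl
  set p := a.perm⁻¹ i
  set q := a.perm⁻¹ j
  have hpq : p ≠ q := a.perm⁻¹.injective.ne hij.ne
  have hap : a.perm p = i := by simp [p]
  have haq : a.perm q = j := by simp [q]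
  have hstep : BruhatStep (mul a (refl p q k)) a := by
    refine ⟨⟨p, q, k, hpq, (mul_refl_refl a hpq k).symm⟩, len_mul_refl_lt a hpq ?_⟩
    simp only [isPos_mk, rootAct_mk, isNeg_mk, hap, haq, hatr]
    omega
  have htr : (mul a (refl p q k)).tr = fun m =>
      η m - k * ((if m = i then 1 else 0) - (if m = j then 1 else 0)) := by
    rw [mul_refl_tr, hap, haq, hatr]
    funext m
    split_ifs <;> simp_all [sub_eq_add_neg]
  rw [XLe, ← htr]
  exact (minRep_le _ (mul a (refl p q k)).perm).tail hstep

lemma mem_string_of_xle {τ η : Fin n → ℤ} {i j : Fin n} {k : ℤ} (hij : i < j)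
    (hline : τ = fun m => η m - k * ((if m = i then 1 else 0) - (if m = j then 1 else 0)))
    (h : XLe τ η) : (0 ≤ k ∧ k < η i - η j) ∨ (η i - η j ≤ k ∧ k ≤ 0) := by
  have hτi : τ i = η i - k := by simp [hline, hij.ne]
  have hτj : τ j = η j + k := by simp [hline, hij.ne']
  have hexcess := BruhatLe.excess_le h (max (η i) (η j))
  rw [← sub_nonneg, excess, excess, Fintype.sum_sub_sum_eq_of_eq_off_pair _ _ hij.ne
    fun m h1 h2 => by simp [minRep, hline, h1, h2]] at hexcess
  simp only [minRep, hτi, hτj] at hexcess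
  suffices ¬ (0 < k ∧ k = η i - η j) by omega
  rintro ⟨hk, hkN⟩
  -- at the endpoint `k = N > 0`, `τ = s_α η` and also `η ≤ τ`
  have hle : XLe η τ := by
    refine xle_of_mem_string (k := -k) hij ?_ (by rw [hτi, hτj]; omega)
    funext m
    simp only [hline]
    ring
  have hτη := congrArg AffW.tr (BruhatLe.antisymm h hle)
  have := congrFun hτη i
  simp only [minRep] at this
  omega

lemma xle_iff_mem_string {τ η : Fin n → ℤ} {i j : Fin n} {k : ℤ} (hij : i < j)
    (hline : τ = fun m => η m - k * ((if m = i then 1 else 0) - (if m = j then 1 else 0))) :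
    XLe τ η ↔ (0 ≤ k ∧ k < η i - η j) ∨ (η i - η j ≤ k ∧ k ≤ 0) :=
  ⟨mem_string_of_xle hij hline, xle_of_mem_string hij hline⟩

end AffW

open AffW in
/-- Let `α = ε_i - ε_j` (`i < j`) be a positive root of `Sₙ`, `τ, η ∈ ℤⁿ` with
`η - τ ∈ ℤ α^∨`, and `w ∈ Sₙ` with `wα > 0` (i.e. `w(i) < w(j)`).  Then
`τ ≤ η` in the Bruhat order on `ℤⁿ` iff `wτ ≤ wη`. -/
theorem bruhat_string_lemma (n : ℕ) (τ η : Fin n → ℤ) (w : Equiv.Perm (Fin n))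
    (i j : Fin n) (k : ℤ) (hij : i < j) (hw : w i < w j)
    (hline : τ = fun m => η m - k * ((if m = i then 1 else 0) - (if m = j then 1 else 0))) :
    XLe τ η ↔ XLe (fun m => τ (w⁻¹ m)) (fun m => η (w⁻¹ m)) := by
  have hwline : (fun m => τ (w⁻¹ m)) = fun m => η (w⁻¹ m) -
      k * ((if m = w i then 1 else 0) - (if m = w j then 1 else 0)) := by
    funext m
    simp [hline, Equiv.symm_apply_eq]
  rw [xle_iff_mem_string hij hline, xle_iff_mem_string hw hwline]
  simp
end

section
/- The Demazure–Lusztig operators $H_i(\xi) = v^{-1}s_i(\xi) + (v^{-1}-v)\,x_i\frac{\xi - s_i(\xi)}{x_i - x_{i+1}}$ on $\mathbb{Z}[v,v^{-1}][x_1^{\pm1},\ldots,x_n^{\pm1}]$ satisfy the quadratic relation $(H_i + v)(H_i - v^{-1}) = 0$ and the braid relations $H_i H_{i+1} H_i = H_{i+1} H_i H_{i+1}$ and $H_i H_j = H_j H_i$ for $|i-j| \ge 2$. -/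
/-!
`𝓛[x^{±1}]` is a domain, so the defining identity determines `H_i` and, over the fraction field,
reads `H_i = c(i, i+1) + (v⁻¹ - c(i, i+1)) s_i` with `c = dlCoeff`.
Applying a permutation `w` to it gives `w (H_i ξ)` as the same kind of combination of `w ξ` and
`w s_i ξ`, so each side of each relation expands into a combination of the `w ξ`, `w` in the
group generated by the swaps involved. Commutation is then formal, the quadratic relation
follows from `c(p, q) + c(q, p) = v⁻¹ - v` and `v⁻¹ v = 1`, and the braid relation, after
`s_i s_{i+1} s_i = s_{i+1} s_i s_{i+1}`, is an identity of rational functions in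
`x_i, x_{i+1}, x_{i+2}`.
-/

open LaurentPolynomial

/-- The coefficient ring `𝓛 = ℤ[v, v⁻¹]`. -/
abbrev LL : Type := LaurentPolynomial ℤ

/-- Laurent polynomials `𝓛[x₁^{±1}, …, x_N^{±1}]`. -/
abbrev LP (N : ℕ) : Type := AddMonoidAlgebra LL (Fin N →₀ ℤ)

namespace LP

variable {N : ℕ}

/-- The variable `x_j`. -/
noncomputable def Xv (j : Fin N) : LP N :=
  AddMonoidAlgebra.single (Finsupp.single j 1) 1

/-- The action of a permutation `σ ∈ S_N` on Laurent polynomials by permuting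
the variables: `x^τ ↦ x^{σ(τ)}`. -/
noncomputable def permAct (σ : Equiv.Perm (Fin N)) : LP N →+* LP N :=
  AddMonoidAlgebra.mapDomainRingHom LL (Finsupp.mapDomain.addMonoidHom σ)

/-- The monomial `x^τ`. -/
noncomputable def mono (τ : Fin N → ℤ) : LP N :=
  AddMonoidAlgebra.single (Finsupp.equivFunOnFinite.symm τ) 1

/-- A family `H i` of `𝓛`-linear operators is a family of Demazure–Lusztig
operators if it satisfies, after clearing the denominator `x_i - x_{i+1}`, the
defining identity
`H_i(ξ) = v⁻¹ s_i(ξ) + (v⁻¹ - v)·x_i·(ξ - s_i ξ)/(x_i - x_{i+1})`. -/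
def IsDL {n : ℕ} (H : Fin n → (LP (n + 1) →ₗ[LL] LP (n + 1))) : Prop :=
  ∀ (i : Fin n) (ξ : LP (n + 1)),
    (Xv i.castSucc - Xv i.succ) * H i ξ =
      (T (-1) : LL) • ((Xv i.castSucc - Xv i.succ) *
        permAct (Equiv.swap i.castSucc i.succ) ξ) +
      ((T (-1) - T 1 : LL)) • (Xv i.castSucc *
        (ξ - permAct (Equiv.swap i.castSucc i.succ) ξ))

end LP

theorem Equiv.swap_mul_swap_mul_swap_braid {α : Type*} [DecidableEq α] {a b c : α}
    (hab : a ≠ b) (hac : a ≠ c) (hbc : b ≠ c) :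
    swap a b * swap b c * swap a b = swap b c * swap a b * swap b c := by
  rw [swap_mul_swap_mul_swap hab hac, swap_comm a b, swap_comm b c,
    swap_mul_swap_mul_swap hbc.symm hac.symm, swap_comm]

namespace LP

variable {N : ℕ}

lemma permAct_eq_mapDomainAlgHom (σ : Equiv.Perm (Fin N)) :
    (permAct σ : LP N → LP N) =
      AddMonoidAlgebra.mapDomainAlgHom LL LL (Finsupp.mapDomain.addMonoidHom σ) := rfl

lemma permAct_smul (σ : Equiv.Perm (Fin N)) (c : LL) (p : LP N) :
    permAct σ (c • p) = c • permAct σ p := by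
  rw [permAct_eq_mapDomainAlgHom, map_smul]

lemma permAct_mul (σ τ : Equiv.Perm (Fin N)) :
    permAct (σ * τ) = (permAct σ).comp (permAct τ) := by
  rw [permAct, permAct, permAct, ← AddMonoidAlgebra.mapDomainRingHom_comp,
    Equiv.Perm.coe_mul, Finsupp.mapDomain.addMonoidHom_comp]

lemma permAct_one : permAct (1 : Equiv.Perm (Fin N)) = RingHom.id (LP N) := by
  rw [permAct, Equiv.Perm.coe_one, Finsupp.mapDomain.addMonoidHom_id,
    AddMonoidAlgebra.mapDomainRingHom_id]

lemma permAct_Xv (σ : Equiv.Perm (Fin N)) (j : Fin N) : permAct σ (Xv j) = Xv (σ j) := by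
  simp [permAct, Xv]

lemma Xv_injective : Function.Injective (Xv : Fin N → LP N) := fun _ _ h =>
  Finsupp.single_left_injective one_ne_zero
    (AddMonoidAlgebra.single_left_injective one_ne_zero h)

variable (N) in
abbrev Frac : Type := FractionRing (LP N)

lemma algebraMap_smul_eq_mul (c : LL) (p : LP N) :
    algebraMap (LP N) (Frac N) (c • p) =
      algebraMap LL (Frac N) c * algebraMap (LP N) (Frac N) p := by
  rw [Algebra.smul_def, map_mul, ← IsScalarTower.algebraMap_apply]

/-- `c(p, q) = (v⁻¹ - v) x_p / (x_p - x_q)`. -/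
noncomputable def dlCoeff (p q : Fin N) : Frac N :=
  algebraMap LL (Frac N) (T (-1) - T 1) * algebraMap (LP N) (Frac N) (Xv p) /
    (algebraMap (LP N) (Frac N) (Xv p) - algebraMap (LP N) (Frac N) (Xv q))

lemma algebraMap_Xv_sub_ne_zero {p q : Fin N} (h : p ≠ q) :
    algebraMap (LP N) (Frac N) (Xv p) - algebraMap (LP N) (Frac N) (Xv q) ≠ 0 := by
  rw [sub_ne_zero, (IsFractionRing.injective (LP N) (Frac N)).ne_iff]
  exact Xv_injective.ne h

lemma dlCoeff_add_dlCoeff {p q : Fin N} (h : p ≠ q) :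
    dlCoeff p q + dlCoeff q p =
      algebraMap LL (Frac N) (T (-1)) - algebraMap LL (Frac N) (T 1) := by
  have hpq := algebraMap_Xv_sub_ne_zero h
  have hqp := algebraMap_Xv_sub_ne_zero h.symm
  simp only [dlCoeff, map_sub]
  field_simp
  ring

variable {n : ℕ} {H : Fin n → (LP (n + 1) →ₗ[LL] LP (n + 1))}

lemma IsDL.permAct_apply (hH : IsDL H) (i : Fin n) (σ : Equiv.Perm (Fin (n + 1)))
    (ξ : LP (n + 1)) :
    (Xv (σ i.castSucc) - Xv (σ i.succ)) * permAct σ (H i ξ) =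
      (T (-1) : LL) • ((Xv (σ i.castSucc) - Xv (σ i.succ)) *
        permAct (σ * Equiv.swap i.castSucc i.succ) ξ) +
      ((T (-1) - T 1 : LL)) • (Xv (σ i.castSucc) *
        (permAct σ ξ - permAct (σ * Equiv.swap i.castSucc i.succ) ξ)) := by
  simpa only [map_add, map_mul, map_sub, permAct_smul, permAct_Xv, permAct_mul,
    RingHom.comp_apply] using congrArg (permAct σ) (hH i ξ)

lemma IsDL.algebraMap_permAct_apply (hH : IsDL H) (i : Fin n) (σ : Equiv.Perm (Fin (n + 1)))
    (ξ : LP (n + 1)) :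
    algebraMap _ (Frac (n + 1)) (permAct σ (H i ξ)) =
      dlCoeff (σ i.castSucc) (σ i.succ) * algebraMap _ (Frac (n + 1)) (permAct σ ξ) +
      (algebraMap LL _ (T (-1)) - dlCoeff (σ i.castSucc) (σ i.succ)) *
        algebraMap _ (Frac (n + 1)) (permAct (σ * Equiv.swap i.castSucc i.succ) ξ) := by
  have hne := algebraMap_Xv_sub_ne_zero (σ.injective.ne i.castSucc_lt_succ.ne)
  have h := congrArg (algebraMap (LP (n + 1)) (Frac (n + 1))) (hH.permAct_apply i σ ξ)
  simp only [map_add, map_mul, map_sub, algebraMap_smul_eq_mul] at h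
  simp only [dlCoeff, map_sub]
  field_simp
  linear_combination h

lemma IsDL.algebraMap_apply (hH : IsDL H) (i : Fin n) (ξ : LP (n + 1)) :
    algebraMap _ (Frac (n + 1)) (H i ξ) =
      dlCoeff i.castSucc i.succ * algebraMap _ (Frac (n + 1)) ξ +
      (algebraMap LL _ (T (-1)) - dlCoeff i.castSucc i.succ) *
        algebraMap _ (Frac (n + 1)) (permAct (Equiv.swap i.castSucc i.succ) ξ) := by
  simpa only [permAct_one, one_mul, RingHom.id_apply, Equiv.Perm.coe_one, id_eq]
    using hH.algebraMap_permAct_apply i 1 ξ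

lemma algebraMap_T_neg_one_mul_T_one :
    algebraMap LL (Frac N) (T (-1)) * algebraMap LL (Frac N) (T 1) = 1 := by
  rw [← map_mul, ← T_add, neg_add_cancel, T_zero, map_one]

theorem IsDL.quadratic (hH : IsDL H) (i : Fin n) (ξ : LP (n + 1)) :
    H i (H i ξ) + ((T 1 - T (-1) : LL)) • H i ξ - ξ = 0 := by
  apply IsFractionRing.injective (LP (n + 1)) (Frac (n + 1))
  simp only [map_add, map_sub, map_zero, algebraMap_smul_eq_mul, hH.algebraMap_apply,
    hH.algebraMap_permAct_apply, Equiv.swap_apply_left, Equiv.swap_apply_right,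
    Equiv.swap_mul_self, permAct_one, RingHom.id_apply]
  linear_combination
    ((dlCoeff i.castSucc i.succ - algebraMap LL _ (T (-1))) * algebraMap _ (Frac (n + 1)) ξ +
      (algebraMap LL _ (T (-1)) - dlCoeff i.castSucc i.succ) *
        algebraMap _ (Frac (n + 1)) (permAct (Equiv.swap i.castSucc i.succ) ξ)) *
      dlCoeff_add_dlCoeff i.castSucc_lt_succ.ne +
    algebraMap _ (Frac (n + 1)) ξ * algebraMap_T_neg_one_mul_T_one

theorem IsDL.comm (hH : IsDL H) {i j : Fin n} (hij : (i : ℕ) + 2 ≤ j) (ξ : LP (n + 1)) :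
    H i (H j ξ) = H j (H i ξ) := by
  apply IsFractionRing.injective (LP (n + 1)) (Frac (n + 1))
  have h₁ : i.castSucc ≠ j.castSucc := Fin.ne_of_val_ne (by simp; omega)
  have h₂ : i.succ ≠ j.castSucc := Fin.ne_of_val_ne (by simp; omega)
  have h₃ : i.castSucc ≠ j.succ := Fin.ne_of_val_ne (by simp; omega)
  have h₄ : i.succ ≠ j.succ := Fin.ne_of_val_ne (by simp; omega)
  have hst : Equiv.swap i.castSucc i.succ * Equiv.swap j.castSucc j.succ =
      Equiv.swap j.castSucc j.succ * Equiv.swap i.castSucc i.succ :=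
    (Equiv.Perm.disjoint_swap_swap (by
      simp [h₁, h₂, h₃, h₄, i.castSucc_lt_succ.ne, j.castSucc_lt_succ.ne])).commute.eq
  simp only [hH.algebraMap_apply, hH.algebraMap_permAct_apply,
    Equiv.swap_apply_of_ne_of_ne h₁.symm h₂.symm,
    Equiv.swap_apply_of_ne_of_ne h₃.symm h₄.symm, Equiv.swap_apply_of_ne_of_ne h₁ h₃,
    Equiv.swap_apply_of_ne_of_ne h₂ h₄, hst]
  ring

theorem IsDL.braid (hH : IsDL H) {i j : Fin n} (hij : (i : ℕ) + 1 = j) (ξ : LP (n + 1)) :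
    H i (H j (H i ξ)) = H j (H i (H j ξ)) := by
  apply IsFractionRing.injective (LP (n + 1)) (Frac (n + 1))
  have hq : j.castSucc = i.succ := Fin.ext (by simp; omega)
  have hpq : i.castSucc ≠ i.succ := i.castSucc_lt_succ.ne
  have hpr : i.castSucc ≠ j.succ := Fin.ne_of_val_ne (by simp; omega)
  have hqr : i.succ ≠ j.succ := Fin.ne_of_val_ne (by simp; omega)
  have hsr : Equiv.swap i.castSucc i.succ j.succ = j.succ :=
    Equiv.swap_apply_of_ne_of_ne hpr.symm hqr.symm
  have htp : Equiv.swap i.succ j.succ i.castSucc = i.castSucc :=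
    Equiv.swap_apply_of_ne_of_ne hpq hpr
  have hsts := Equiv.swap_mul_swap_mul_swap_braid hpq hpr hqr
  simp only [hH.algebraMap_apply, hH.algebraMap_permAct_apply, hq, Equiv.Perm.mul_apply,
    Equiv.swap_apply_left, Equiv.swap_apply_right, hsr, htp, Equiv.swap_mul_self, permAct_one,
    RingHom.id_apply, hsts]
  simp only [dlCoeff, map_sub]
  have := algebraMap_Xv_sub_ne_zero hpq
  have := algebraMap_Xv_sub_ne_zero hpr
  have := algebraMap_Xv_sub_ne_zero hqr
  have := algebraMap_Xv_sub_ne_zero hpq.symm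
  have := algebraMap_Xv_sub_ne_zero hpr.symm
  have := algebraMap_Xv_sub_ne_zero hqr.symm
  field_simp
  ring

end LP

open LP LaurentPolynomial in
/-- The Demazure–Lusztig operators satisfy the Hecke quadratic relation
`(H_i + v)(H_i - v⁻¹) = 0` and the braid relations
`H_i H_{i+1} H_i = H_{i+1} H_i H_{i+1}` and `H_i H_j = H_j H_i` for `|i-j| ≥ 2`. -/
theorem demazure_lusztig_relations (n : ℕ)
    (H : Fin n → (LP (n + 1) →ₗ[LL] LP (n + 1))) (hH : IsDL H) :
    (∀ (i : Fin n) (ξ : LP (n + 1)),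
      H i (H i ξ) + ((T 1 - T (-1) : LL)) • H i ξ - ξ = 0) ∧
    (∀ i j : Fin n, (i : ℕ) + 1 = (j : ℕ) →
      ∀ ξ, H i (H j (H i ξ)) = H j (H i (H j ξ))) ∧
    (∀ i j : Fin n, (i : ℕ) + 2 ≤ (j : ℕ) →
      ∀ ξ, H i (H j ξ) = H j (H i ξ)) :=
  ⟨hH.quadratic, fun _ _ hij => hH.braid hij, fun _ _ hij => hH.comm hij⟩
end

section
/- Let $\mathcal{H}^{pol}$ be the monoid algebra situation: the (extended) affine Hecke algebra of $GL_n$ is generated over its finite Hecke subalgebra $\mathcal{H}_f$ by an element $\omega$ subject only to the relations $H_i\omega = \omega H_{i+1}$ for $i = 1,\ldots,n-2$ and $H_{n-1}\omega^2 = \omega^2 H_1$. Equivalently, this presentation is equivalent to the presentation by $\mathcal{H}_f$ and a single element $Z_1$ with relations $H_1 Z_1 H_1 Z_1 = Z_1 H_1 Z_1 H_1$ and $H_i Z_1 = Z_1 H_i$ for $i \ge 2$, under the substitution $Z_1 = H_1^{-1}\cdots H_{n-1}^{-1}\omega$ and $\omega = H_{n-1}\cdots H_1 Z_1$. -/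
section HeckeAux

variable {M : Type*} [Monoid M]

/-- Left-to-right product `f 0 * f 1 * ⋯ * f (n-1)`. -/
def heckeP (f : ℕ → M) : ℕ → M
  | 0 => 1
  | n + 1 => heckeP f n * f n

/-- Right-to-left product `f (n-1) * ⋯ * f 1 * f 0`. -/
def heckeQ (f : ℕ → M) : ℕ → M
  | 0 => 1
  | n + 1 => f n * heckeQ f n

theorem heckeP_zero (f : ℕ → M) : heckeP f 0 = 1 := rfl
theorem heckeP_succ (f : ℕ → M) (n : ℕ) : heckeP f (n + 1) = heckeP f n * f n := rfl
theorem heckeQ_zero (f : ℕ → M) : heckeQ f 0 = 1 := rfl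
theorem heckeQ_succ (f : ℕ → M) (n : ℕ) : heckeQ f (n + 1) = f n * heckeQ f n := rfl

theorem heckeP_ofFn (g : ℕ → M) (n : ℕ) :
    (List.ofFn fun i : Fin n => g (i : ℕ)).prod = heckeP g n := by
  induction n with
  | zero => simp [heckeP_zero]
  | succ n ih =>
    rw [List.ofFn_succ']
    simp only [Fin.coe_castSucc, List.concat_eq_append, List.prod_append, List.prod_cons,
      List.prod_nil, Fin.val_last, mul_one]
    rw [ih, heckeP_succ]

theorem heckeQ_ofFn (g : ℕ → M) (n : ℕ) :
    (List.ofFn fun i : Fin n => g (i : ℕ)).reverse.prod = heckeQ g n := by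
  induction n with
  | zero => simp [heckeQ_zero]
  | succ n ih =>
    rw [List.ofFn_succ']
    simp only [Fin.coe_castSucc, List.concat_eq_append, List.reverse_append, List.reverse_cons,
      List.reverse_nil, List.nil_append, List.cons_append, List.prod_cons, Fin.val_last]
    rw [ih, heckeQ_succ]

theorem heckeP_map {N : Type*} [Monoid N] (φ : M →* N) (f : ℕ → M) (n : ℕ) :
    φ (heckeP f n) = heckeP (fun j => φ (f j)) n := by
  induction n with
  | zero => simp [heckeP_zero]
  | succ n ih => rw [heckeP_succ, map_mul, ih, heckeP_succ]

theorem heckeQ_map {N : Type*} [Monoid N] (φ : M →* N) (f : ℕ → M) (n : ℕ) :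
    φ (heckeQ f n) = heckeQ (fun j => φ (f j)) n := by
  induction n with
  | zero => simp [heckeQ_zero]
  | succ n ih => rw [heckeQ_succ, map_mul, ih, heckeQ_succ]

end HeckeAux



/-- Equivalence of the two presentations of the polynomial part `𝓗^pol` of the
extended affine Hecke algebra of `GLₙ` over `𝓗_f` (here `m = n - 1 ≥ 1`, so
`H 0, …, H (m-1)` are the finite Hecke generators `H₁, …, H_{n-1}`):

(iv) a generator `ω` with `Hᵢω = ωH_{i+1}` (`i = 1,…,n-2`) and
`H_{n-1}ω² = ω²H₁`;

(iii) a generator `Z₁` with `H₁Z₁H₁Z₁ = Z₁H₁Z₁H₁` and `HᵢZ₁ = Z₁Hᵢ` (`i ≥ 2`);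

under the mutually inverse substitutions `Z₁ = H₁⁻¹ ⋯ H_{n-1}⁻¹ ω` and
`ω = H_{n-1} ⋯ H₁ Z₁`. -/
theorem hecke_presentation_equiv (m : ℕ) (hm : 1 ≤ m) (A : Type*) [Ring A]
    (v : Aˣ) (hcentral : ∀ a : A, (v : A) * a = a * (v : A))
    (H : Fin m → Aˣ)
    (hbraid : ∀ i j : Fin m, (i : ℕ) + 1 = (j : ℕ) →
      (H i : A) * H j * H i = (H j : A) * H i * H j)
    (hcomm : ∀ i j : Fin m, (i : ℕ) + 2 ≤ (j : ℕ) →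
      (H i : A) * H j = (H j : A) * H i)
    (hquad : ∀ i : Fin m, ((H i : A) + (v : A)) * ((H i : A) - ((v⁻¹ : Aˣ) : A)) = 0) :
    (∀ ω : A,
      (∀ i j : Fin m, (i : ℕ) + 1 = (j : ℕ) → (H i : A) * ω = ω * (H j : A)) →
      ((H ⟨m - 1, by omega⟩ : A) * (ω * ω) = (ω * ω) * (H ⟨0, by omega⟩ : A)) →
      -- then `Z₁ := H₁⁻¹ ⋯ H_{n-1}⁻¹ ω` satisfies the relations of (iii),
      -- and `ω` is recovered as `H_{n-1} ⋯ H₁ Z₁`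
      (((H ⟨0, by omega⟩ : A) * ((List.ofFn fun i : Fin m => (((H i)⁻¹ : Aˣ) : A)).prod * ω)
          * (H ⟨0, by omega⟩ : A) * ((List.ofFn fun i : Fin m => (((H i)⁻¹ : Aˣ) : A)).prod * ω) =
        ((List.ofFn fun i : Fin m => (((H i)⁻¹ : Aˣ) : A)).prod * ω) * (H ⟨0, by omega⟩ : A)
          * ((List.ofFn fun i : Fin m => (((H i)⁻¹ : Aˣ) : A)).prod * ω) * (H ⟨0, by omega⟩ : A)) ∧
      (∀ i : Fin m, 1 ≤ (i : ℕ) →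
        (H i : A) * ((List.ofFn fun j : Fin m => (((H j)⁻¹ : Aˣ) : A)).prod * ω) =
          ((List.ofFn fun j : Fin m => (((H j)⁻¹ : Aˣ) : A)).prod * ω) * (H i : A)) ∧
      (ω = (List.ofFn fun i : Fin m => (H i : A)).reverse.prod *
        ((List.ofFn fun i : Fin m => (((H i)⁻¹ : Aˣ) : A)).prod * ω)))) ∧
    (∀ Z1 : A,
      ((H ⟨0, by omega⟩ : A) * Z1 * (H ⟨0, by omega⟩ : A) * Z1 =
        Z1 * (H ⟨0, by omega⟩ : A) * Z1 * (H ⟨0, by omega⟩ : A)) →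
      (∀ i : Fin m, 1 ≤ (i : ℕ) → (H i : A) * Z1 = Z1 * (H i : A)) →
      -- then `ω := H_{n-1} ⋯ H₁ Z₁` satisfies the relations of (iv),
      -- and `Z₁` is recovered as `H₁⁻¹ ⋯ H_{n-1}⁻¹ ω`
      ((∀ i j : Fin m, (i : ℕ) + 1 = (j : ℕ) →
        (H i : A) * ((List.ofFn fun k : Fin m => (H k : A)).reverse.prod * Z1) =
          ((List.ofFn fun k : Fin m => (H k : A)).reverse.prod * Z1) * (H j : A)) ∧
      ((H ⟨m - 1, by omega⟩ : A) *
          (((List.ofFn fun k : Fin m => (H k : A)).reverse.prod * Z1) *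
            ((List.ofFn fun k : Fin m => (H k : A)).reverse.prod * Z1)) =
        (((List.ofFn fun k : Fin m => (H k : A)).reverse.prod * Z1) *
            ((List.ofFn fun k : Fin m => (H k : A)).reverse.prod * Z1)) *
          (H ⟨0, by omega⟩ : A)) ∧
      (Z1 = (List.ofFn fun i : Fin m => (((H i)⁻¹ : Aˣ) : A)).prod *
        ((List.ofFn fun k : Fin m => (H k : A)).reverse.prod * Z1)))) := by
  
  set H' : ℕ → Aˣ := fun j => if h : j < m then H ⟨j, h⟩ else 1 with hH'def
  set K : ℕ → Aˣ := fun j => (H' j)⁻¹ with hKdef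
  have hm1 : m - 1 + 1 = m := Nat.succ_pred_eq_of_pos hm
  have hHval : ∀ (j : ℕ) (h : j < m), H' j = H ⟨j, h⟩ := fun j h => dif_pos h
  have hHone : ∀ j : ℕ, m ≤ j → H' j = 1 := fun j h => dif_neg (by omega)
  have hH' : ∀ i : Fin m, H' (i : ℕ) = H i := fun i => by
    rw [hHval (i : ℕ) i.isLt]
  have braidU : ∀ j : ℕ, j + 1 < m →
      H' j * H' (j + 1) * H' j = H' (j + 1) * H' j * H' (j + 1) := by
    intro j hj
    have hj' : j < m := by omega
    have := hbraid ⟨j, hj'⟩ ⟨j + 1, hj⟩ rfl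
    apply Units.ext
    simpa only [Units.val_mul, hHval j hj', hHval (j + 1) hj] using this
  have commU : ∀ i j : ℕ, i + 2 ≤ j → H' i * H' j = H' j * H' i := by
    intro i j hij
    by_cases hj : j < m
    · have hi : i < m := by omega
      have := hcomm ⟨i, hi⟩ ⟨j, hj⟩ hij
      apply Units.ext
      simpa only [Units.val_mul, hHval i hi, hHval j hj] using this
    · rw [hHone j (by omega), mul_one, one_mul]
  -- commuting an element past the Q-product
  have commQU : ∀ (x : Aˣ) (n : ℕ), (∀ j : ℕ, j < n → x * H' j = H' j * x) →
      x * heckeQ H' n = heckeQ H' n * x := by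
    intro x n hx
    induction n with
    | zero => rw [heckeQ_zero, mul_one, one_mul]
    | succ n ih =>
      rw [heckeQ_succ, ← mul_assoc, hx n (by omega), mul_assoc,
        ih (fun j hj => hx j (by omega)), ← mul_assoc]
  have swapQ : ∀ i : ℕ, i + 1 < m → ∀ n : ℕ, i + 2 ≤ n →
      H' i * heckeQ H' n = heckeQ H' n * H' (i + 1) := by
    intro i hi n hn
    induction n, hn using Nat.le_induction with
    | base =>
      have c : H' (i + 1) * heckeQ H' i = heckeQ H' i * H' (i + 1) :=
        commQU _ i (fun j hj => (commU j (i + 1) (by omega)).symm)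
      rw [heckeQ_succ, heckeQ_succ]
      calc H' i * (H' (i + 1) * (H' i * heckeQ H' i))
          = (H' i * H' (i + 1) * H' i) * heckeQ H' i := by simp only [mul_assoc]
        _ = (H' (i + 1) * H' i * H' (i + 1)) * heckeQ H' i := by rw [braidU i hi]
        _ = H' (i + 1) * (H' i * (H' (i + 1) * heckeQ H' i)) := by simp only [mul_assoc]
        _ = H' (i + 1) * (H' i * (heckeQ H' i * H' (i + 1))) := by rw [c]
        _ = (H' (i + 1) * (H' i * heckeQ H' i)) * H' (i + 1) := by simp only [mul_assoc]
    | succ n hn ih =>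
      rw [heckeQ_succ, ← mul_assoc, commU i n (by omega), mul_assoc, ih, ← mul_assoc]
  have QP_one : ∀ n : ℕ, heckeQ H' n * heckeP K n = 1 := by
    intro n
    induction n with
    | zero => rw [heckeQ_zero, heckeP_zero, mul_one]
    | succ n ih =>
      have e1 : H' n * K n = 1 := mul_inv_cancel _
      rw [heckeQ_succ, heckeP_succ, mul_assoc, ← mul_assoc (heckeQ H' n), ih, one_mul, e1]
  have hPQinv : ∀ n : ℕ, heckeP K n = (heckeQ H' n)⁻¹ :=
    fun n => eq_inv_of_mul_eq_one_right (QP_one n)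
  have PQ_one : ∀ n : ℕ, heckeP K n * heckeQ H' n = 1 := by
    intro n; rw [hPQinv n, inv_mul_cancel]
  have swapP : ∀ i : ℕ, i + 1 < m → ∀ n : ℕ, i + 2 ≤ n →
      H' (i + 1) * heckeP K n = heckeP K n * H' i := by
    intro i hi n hn
    have h := swapQ i hi n hn
    rw [hPQinv n]
    refine mul_left_cancel (a := heckeQ H' n) ?_
    rw [← mul_assoc, ← h, mul_assoc, mul_inv_cancel, mul_one, ← mul_assoc,
      mul_inv_cancel, one_mul]
  have swapPK : ∀ i : ℕ, i + 1 < m → ∀ n : ℕ, i + 2 ≤ n →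
      K (i + 1) * heckeP K n = heckeP K n * K i := by
    intro i hi n hn
    refine mul_left_cancel (a := H' (i + 1)) ?_
    have e1 : H' (i + 1) * K (i + 1) = 1 := mul_inv_cancel _
    have e2 : H' i * K i = 1 := mul_inv_cancel _
    rw [← mul_assoc, e1, one_mul, ← mul_assoc, swapP i hi n hn, mul_assoc, e2, mul_one]
  -- peeling the first factor of P and the last factor of Q
  have headP : ∀ n : ℕ, H' 0 * heckeP K (n + 1) = heckeP (fun j => K (j + 1)) n := by
    intro n
    induction n with
    | zero =>
      have e1 : H' 0 * K 0 = 1 := mul_inv_cancel _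
      rw [heckeP_succ, heckeP_zero, heckeP_zero, one_mul, e1]
    | succ n ih =>
      rw [heckeP_succ, ← mul_assoc, ih, heckeP_succ]
  have headQ : ∀ n : ℕ, heckeQ H' (n + 1) = heckeQ (fun j => H' (j + 1)) n * H' 0 := by
    intro n
    induction n with
    | zero => rw [heckeQ_succ, heckeQ_zero, heckeQ_zero, mul_one, one_mul]
    | succ n ih =>
      rw [heckeQ_succ, ih, heckeQ_succ, mul_assoc]
  have shiftP : ∀ k : ℕ, k + 1 ≤ m →
      heckeP (fun j => K (j + 1)) k * heckeP K m = heckeP K m * heckeP K k := by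
    intro k
    induction k with
    | zero => intro _; rw [heckeP_zero, heckeP_zero, one_mul, mul_one]
    | succ k ih =>
      intro hk
      rw [heckeP_succ, heckeP_succ, mul_assoc,
        swapPK k (by omega) m (by omega), ← mul_assoc, ih (by omega), mul_assoc]
  have shiftQ : ∀ k : ℕ, k + 1 ≤ m →
      heckeQ H' m * heckeQ (fun j => H' (j + 1)) k = heckeQ H' k * heckeQ H' m := by
    intro k
    induction k with
    | zero => intro _; rw [heckeQ_zero, heckeQ_zero, mul_one, one_mul]
    | succ k ih =>
      intro hk
      rw [heckeQ_succ, heckeQ_succ, ← mul_assoc, ← swapQ k (by omega) m (by omega),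
        mul_assoc, ih (by omega), ← mul_assoc]
  have F3u : heckeP K (m - 1) = heckeP K m * H' (m - 1) := by
    have e1 : K (m - 1) * H' (m - 1) = 1 := inv_mul_cancel _
    have e : heckeP K (m - 1 + 1) = heckeP K (m - 1) * K (m - 1) := heckeP_succ _ _
    rw [hm1] at e
    rw [e, mul_assoc, e1, mul_one]
  have F1u : H' 0 * heckeP K m = heckeP (fun j => K (j + 1)) (m - 1) := by
    have := headP (m - 1); rwa [hm1] at this
  have key1u : H' 0 * (heckeP K m * heckeP K m) =
      heckeP K m * (heckeP K m * H' (m - 1)) := by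
    calc H' 0 * (heckeP K m * heckeP K m)
        = (H' 0 * heckeP K m) * heckeP K m := by rw [mul_assoc]
      _ = heckeP (fun j => K (j + 1)) (m - 1) * heckeP K m := by rw [F1u]
      _ = heckeP K m * heckeP K (m - 1) := shiftP (m - 1) (by omega)
      _ = heckeP K m * (heckeP K m * H' (m - 1)) := by rw [F3u]
  have G1u : heckeQ H' m = heckeQ (fun j => H' (j + 1)) (m - 1) * H' 0 := by
    have := headQ (m - 1); rwa [hm1] at this
  have key2u : H' (m - 1) * (heckeQ H' m * heckeQ (fun j => H' (j + 1)) (m - 1)) =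
      heckeQ H' m * heckeQ H' m := by
    have e1 : H' (m - 1) * heckeQ H' (m - 1) = heckeQ H' m := by
      have e : heckeQ H' (m - 1 + 1) = H' (m - 1) * heckeQ H' (m - 1) := heckeQ_succ _ _
      rw [hm1] at e
      exact e.symm
    calc H' (m - 1) * (heckeQ H' m * heckeQ (fun j => H' (j + 1)) (m - 1))
        = H' (m - 1) * (heckeQ H' (m - 1) * heckeQ H' m) := by
          rw [shiftQ (m - 1) (by omega)]
      _ = (H' (m - 1) * heckeQ H' (m - 1)) * heckeQ H' m := by rw [mul_assoc]
      _ = heckeQ H' m * heckeQ H' m := by rw [e1]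
  -- bridge between the `List.ofFn` products in the statement and `heckeP`/`heckeQ`
  have listP : (List.ofFn fun i : Fin m => (((H i)⁻¹ : Aˣ) : A)).prod
      = ((heckeP K m : Aˣ) : A) := by
    have h1 : (fun i : Fin m => (((H i)⁻¹ : Aˣ) : A))
        = fun i : Fin m => ((K (i : ℕ) : Aˣ) : A) := by
      funext i
      exact congrArg (fun u : Aˣ => ((u⁻¹ : Aˣ) : A)) (hH' i).symm
    rw [h1, heckeP_ofFn (fun jn => ((K jn : Aˣ) : A)) m]
    exact (heckeP_map (Units.coeHom A) K m).symm
  have listQ : (List.ofFn fun i : Fin m => ((H i : Aˣ) : A)).reverse.prod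
      = ((heckeQ H' m : Aˣ) : A) := by
    have h1 : (fun i : Fin m => ((H i : Aˣ) : A))
        = fun i : Fin m => ((H' (i : ℕ) : Aˣ) : A) := by
      funext i
      exact congrArg (fun u : Aˣ => ((u : Aˣ) : A)) (hH' i).symm
    rw [h1, heckeQ_ofFn (fun jn => ((H' jn : Aˣ) : A)) m]
    exact (heckeQ_map (Units.coeHom A) H' m).symm
  have e0 : ∀ (h : 0 < m), H (⟨0, h⟩ : Fin m) = H' 0 := fun h => (hHval 0 h).symm
  have em1 : ∀ (h : m - 1 < m), H (⟨m - 1, h⟩ : Fin m) = H' (m - 1) :=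
    fun h => (hHval _ h).symm
  -- coerced versions of the key unit identities
  have pSwapP : ∀ i : ℕ, i + 1 < m →
      ((H' (i + 1) : Aˣ) : A) * ((heckeP K m : Aˣ) : A)
        = ((heckeP K m : Aˣ) : A) * ((H' i : Aˣ) : A) := fun i hi => by
    simpa only [Units.val_mul] using congrArg Units.val (swapP i hi m (by omega))
  have pSwapQ : ∀ i : ℕ, i + 1 < m →
      ((H' i : Aˣ) : A) * ((heckeQ H' m : Aˣ) : A)
        = ((heckeQ H' m : Aˣ) : A) * ((H' (i + 1) : Aˣ) : A) := fun i hi => by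
    simpa only [Units.val_mul] using congrArg Units.val (swapQ i hi m (by omega))
  have pQP : ((heckeQ H' m : Aˣ) : A) * ((heckeP K m : Aˣ) : A) = 1 := by
    simpa only [Units.val_mul, Units.val_one] using congrArg Units.val (QP_one m)
  have pPQ : ((heckeP K m : Aˣ) : A) * ((heckeQ H' m : Aˣ) : A) = 1 := by
    simpa only [Units.val_mul, Units.val_one] using congrArg Units.val (PQ_one m)
  have pF1 : ((H' 0 : Aˣ) : A) * ((heckeP K m : Aˣ) : A)
      = ((heckeP (fun j => K (j + 1)) (m - 1) : Aˣ) : A) := by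
    simpa only [Units.val_mul] using congrArg Units.val F1u
  have pF3 : ((heckeP K (m - 1) : Aˣ) : A)
      = ((heckeP K m : Aˣ) : A) * ((H' (m - 1) : Aˣ) : A) := by
    simpa only [Units.val_mul] using congrArg Units.val F3u
  have pKey1 : ((H' 0 : Aˣ) : A) * (((heckeP K m : Aˣ) : A) * ((heckeP K m : Aˣ) : A))
      = ((heckeP K m : Aˣ) : A) * (((heckeP K m : Aˣ) : A) * ((H' (m - 1) : Aˣ) : A)) := by
    simpa only [Units.val_mul] using congrArg Units.val key1u
  have pG1 : ((heckeQ H' m : Aˣ) : A)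
      = ((heckeQ (fun j => H' (j + 1)) (m - 1) : Aˣ) : A) * ((H' 0 : Aˣ) : A) := by
    simpa only [Units.val_mul] using congrArg Units.val G1u
  have pKey2 : ((H' (m - 1) : Aˣ) : A) *
        (((heckeQ H' m : Aˣ) : A) * ((heckeQ (fun j => H' (j + 1)) (m - 1) : Aˣ) : A))
      = ((heckeQ H' m : Aˣ) : A) * ((heckeQ H' m : Aˣ) : A) := by
    simpa only [Units.val_mul] using congrArg Units.val key2u
  constructor
  · -- direction (iv) → (iii)
    intro w hw1 hw2
    rw [em1, e0] at hw2
    rw [listP, listQ, e0]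
    set p : A := ((heckeP K m : Aˣ) : A) with hp
    set t : A := ((heckeP (fun j => K (j + 1)) (m - 1) : Aˣ) : A) with ht
    set pm1 : A := ((heckeP K (m - 1) : Aˣ) : A) with hpm1
    set q : A := ((heckeQ H' m : Aˣ) : A) with hq
    have hw1' : ∀ jn : ℕ, jn + 1 < m →
        ((H' jn : Aˣ) : A) * w = w * ((H' (jn + 1) : Aˣ) : A) := by
      intro jn hj
      have h1 : jn < m := by omega
      have h2 := hw1 ⟨jn, h1⟩ ⟨jn + 1, hj⟩ rfl
      rwa [← hH' ⟨jn, h1⟩, ← hH' ⟨jn + 1, hj⟩] at h2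
    have omove : ∀ k : ℕ, k + 1 ≤ m →
        w * ((heckeP (fun j => K (j + 1)) k : Aˣ) : A)
          = ((heckeP K k : Aˣ) : A) * w := by
      intro k
      induction k with
      | zero =>
        intro _
        rw [heckeP_zero, heckeP_zero, Units.val_one, mul_one, one_mul]
      | succ k ih =>
        intro hk
        have stepf : w * ((K (k + 1) : Aˣ) : A) = ((K k : Aˣ) : A) * w := by
          have h1 : ((H' k : Aˣ) : A) * w = w * ((H' (k + 1) : Aˣ) : A) :=
            hw1' k (by omega)
          have e1 : ((K k : Aˣ) : A) * ((H' k : Aˣ) : A) = 1 := Units.inv_mul (H' k)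
          have e2 : ((H' (k + 1) : Aˣ) : A) * ((K (k + 1) : Aˣ) : A) = 1 :=
            Units.mul_inv (H' (k + 1))
          calc w * ((K (k + 1) : Aˣ) : A)
              = (((K k : Aˣ) : A) * ((H' k : Aˣ) : A)) * w * ((K (k + 1) : Aˣ) : A) := by
                rw [e1, one_mul]
            _ = ((K k : Aˣ) : A) * (((H' k : Aˣ) : A) * w) * ((K (k + 1) : Aˣ) : A) := by
                rw [mul_assoc ((K k : Aˣ) : A)]
            _ = ((K k : Aˣ) : A) * (w * ((H' (k + 1) : Aˣ) : A)) * ((K (k + 1) : Aˣ) : A) := by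
                rw [h1]
            _ = ((K k : Aˣ) : A) * w *
                  (((H' (k + 1) : Aˣ) : A) * ((K (k + 1) : Aˣ) : A)) := by
                simp only [mul_assoc]
            _ = ((K k : Aˣ) : A) * w := by rw [e2, mul_one]
        simp only [heckeP_succ, Units.val_mul]
        rw [← mul_assoc, ih (by omega), mul_assoc, stepf, ← mul_assoc]
    have pF4 : w * t = pm1 * w := omove (m - 1) (by omega)
    have pKey1x : ∀ x : A, ((H' 0 : Aˣ) : A) * (p * (p * x))
        = p * (p * (((H' (m - 1) : Aˣ) : A) * x)) := by
      intro x
      calc ((H' 0 : Aˣ) : A) * (p * (p * x))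
          = (((H' 0 : Aˣ) : A) * (p * p)) * x := by simp only [mul_assoc]
        _ = (p * (p * ((H' (m - 1) : Aˣ) : A))) * x := by rw [pKey1]
        _ = p * (p * (((H' (m - 1) : Aˣ) : A) * x)) := by simp only [mul_assoc]
    have E0 : (p * w) * ((H' 0 : Aˣ) : A) * (p * w)
        = p * (p * (((H' (m - 1) : Aˣ) : A) * (w * w))) := by
      calc (p * w) * ((H' 0 : Aˣ) : A) * (p * w)
          = p * (w * (((H' 0 : Aˣ) : A) * (p * w))) := by simp only [mul_assoc]
        _ = p * (w * ((((H' 0 : Aˣ) : A) * p) * w)) := by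
            rw [← mul_assoc ((H' 0 : Aˣ) : A) p w]
        _ = p * (w * (t * w)) := by rw [pF1]
        _ = p * ((w * t) * w) := by rw [← mul_assoc w t w]
        _ = p * ((pm1 * w) * w) := by rw [pF4]
        _ = p * (p * (((H' (m - 1) : Aˣ) : A) * (w * w))) := by
            rw [pF3]; simp only [mul_assoc]
    refine ⟨?_, ?_, ?_⟩
    · -- the braid relation for Z₁
      calc ((H' 0 : Aˣ) : A) * (p * w) * ((H' 0 : Aˣ) : A) * (p * w)
          = ((H' 0 : Aˣ) : A) * ((p * w) * ((H' 0 : Aˣ) : A) * (p * w)) := by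
            simp only [mul_assoc]
        _ = ((H' 0 : Aˣ) : A) * (p * (p * (((H' (m - 1) : Aˣ) : A) * (w * w)))) := by
            rw [E0]
        _ = p * (p * (((H' (m - 1) : Aˣ) : A) *
              (((H' (m - 1) : Aˣ) : A) * (w * w)))) := pKey1x _
        _ = p * (p * (((H' (m - 1) : Aˣ) : A) * (w * w * ((H' 0 : Aˣ) : A)))) := by
            rw [hw2]
        _ = (p * (p * (((H' (m - 1) : Aˣ) : A) * (w * w)))) * ((H' 0 : Aˣ) : A) := by
            simp only [mul_assoc]
        _ = (p * w) * ((H' 0 : Aˣ) : A) * (p * w) * ((H' 0 : Aˣ) : A) := by rw [← E0]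
    · -- commutation for i ≥ 1
      intro i hi
      have hj : ((i : ℕ) - 1) + 1 = (i : ℕ) := by omega
      rw [← hH' i, ← hj]
      have s := pSwapP ((i : ℕ) - 1) (by have := i.isLt; omega)
      have wc : ((H' ((i : ℕ) - 1) : Aˣ) : A) * w
          = w * ((H' (((i : ℕ) - 1) + 1) : Aˣ) : A) :=
        hw1' _ (by have := i.isLt; omega)
      rw [← mul_assoc, s, mul_assoc, wc, ← mul_assoc]
    · -- recovering ω
      rw [← mul_assoc, pQP, one_mul]
  · -- direction (iii) → (iv)
    intro Z hb hc
    rw [e0] at hb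
    rw [listP, listQ, e0, em1]
    set p : A := ((heckeP K m : Aˣ) : A) with hp
    set q : A := ((heckeQ H' m : Aˣ) : A) with hq
    set u : A := ((heckeQ (fun j => H' (j + 1)) (m - 1) : Aˣ) : A) with hu
    have hc' : ∀ j : ℕ, 1 ≤ j → ((H' j : Aˣ) : A) * Z = Z * ((H' j : Aˣ) : A) := by
      intro j hj
      by_cases h : j < m
      · have h2 := hc ⟨j, h⟩ hj
        rwa [← hH' ⟨j, h⟩] at h2
      · rw [hHone j (by omega), Units.val_one, one_mul, mul_one]
    have zmove : ∀ k : ℕ,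
        Z * ((heckeQ (fun j => H' (j + 1)) k : Aˣ) : A)
          = ((heckeQ (fun j => H' (j + 1)) k : Aˣ) : A) * Z := by
      intro k
      induction k with
      | zero => rw [heckeQ_zero, Units.val_one, mul_one, one_mul]
      | succ k ih =>
        have wc := hc' (k + 1) (by omega)
        simp only [heckeQ_succ, Units.val_mul]
        rw [← mul_assoc, ← wc, mul_assoc, ih, ← mul_assoc]
    have hb'' : ((H' 0 : Aˣ) : A) * (Z * (((H' 0 : Aˣ) : A) * Z))
        = Z * (((H' 0 : Aˣ) : A) * (Z * ((H' 0 : Aˣ) : A))) := by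
      simpa only [mul_assoc] using hb
    have C' : q * (u * (Z * (((H' 0 : Aˣ) : A) * Z))) = (q * Z) * (q * Z) := by
      calc q * (u * (Z * (((H' 0 : Aˣ) : A) * Z)))
          = q * ((u * Z) * (((H' 0 : Aˣ) : A) * Z)) := by simp only [mul_assoc]
        _ = q * ((Z * u) * (((H' 0 : Aˣ) : A) * Z)) := by rw [← zmove (m - 1)]
        _ = q * (Z * (u * (((H' 0 : Aˣ) : A) * Z))) := by simp only [mul_assoc]
        _ = q * (Z * ((u * ((H' 0 : Aˣ) : A)) * Z)) := by
            rw [← mul_assoc u ((H' 0 : Aˣ) : A) Z]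
        _ = q * (Z * (q * Z)) := by rw [← pG1]
        _ = (q * Z) * (q * Z) := by simp only [mul_assoc]
    have qq : q * q = q * (u * ((H' 0 : Aˣ) : A)) := congrArg (fun x => q * x) pG1
    refine ⟨?_, ?_, ?_⟩
    · -- the relations Hᵢ ω = ω H_{i+1}
      intro i j hij
      rw [← hH' i, ← hH' j, ← hij]
      have s := pSwapQ (i : ℕ) (by have := j.isLt; omega)
      have wc := hc' ((i : ℕ) + 1) (by omega)
      rw [← mul_assoc, s, mul_assoc, wc, ← mul_assoc]
    · -- the relation H_{n-1} ω² = ω² H₁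
      calc ((H' (m - 1) : Aˣ) : A) * ((q * Z) * (q * Z))
          = ((H' (m - 1) : Aˣ) : A) * (q * (u * (Z * (((H' 0 : Aˣ) : A) * Z)))) := by
            rw [← C']
        _ = (((H' (m - 1) : Aˣ) : A) * (q * u)) * (Z * (((H' 0 : Aˣ) : A) * Z)) := by
            simp only [mul_assoc]
        _ = (q * q) * (Z * (((H' 0 : Aˣ) : A) * Z)) := by rw [pKey2]
        _ = (q * (u * ((H' 0 : Aˣ) : A))) * (Z * (((H' 0 : Aˣ) : A) * Z)) := by rw [qq]
        _ = q * (u * (((H' 0 : Aˣ) : A) * (Z * (((H' 0 : Aˣ) : A) * Z)))) := by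
            simp only [mul_assoc]
        _ = q * (u * (Z * (((H' 0 : Aˣ) : A) * (Z * ((H' 0 : Aˣ) : A))))) := by
            rw [hb'']
        _ = (q * (u * (Z * (((H' 0 : Aˣ) : A) * Z)))) * ((H' 0 : Aˣ) : A) := by
            simp only [mul_assoc]
        _ = ((q * Z) * (q * Z)) * ((H' 0 : Aˣ) : A) := by rw [C']
    · -- recovering Z₁
      rw [← mul_assoc, pPQ, one_mul]
end

section
/- Let $\lambda \in \mathbb{N}^n$ with length $m = l(\lambda)$ (largest index with $\lambda_m \ne 0$), and let $\lambda^* := (\lambda_m - 1, \lambda_1, \ldots, \lambda_{m-1}, 0, \ldots, 0)$. Set $A(\nu) = \sum_i \binom{\nu_i + 1}{2}$ and $B(\nu) = \sum_i i\,\nu_i^+$ where $\nu^+$ is the weakly decreasing rearrangement of $\nu$. Then $|\lambda| = |\lambda^*| + 1$, $A(\lambda) = A(\lambda^*) + \lambda_m$, and $B(\lambda) = B(\lambda^*) + (m + 1 - a)$, where $a = 1 + \#\{i \in \{1,\ldots,m\} : \lambda_i < \lambda_m\}$. -/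
lemma multiset_map_univ_perm {n : ℕ} (f g : Fin n → ℕ) (σ : Equiv.Perm (Fin n))
    (h : ∀ i, g i = f (σ i)) :
    Multiset.map g Finset.univ.val = Multiset.map f Finset.univ.val := by
  have h2 : Multiset.map g Finset.univ.val = Multiset.map f (Multiset.map σ Finset.univ.val) := by
    rw [Multiset.map_map]; exact Multiset.map_congr rfl (fun x _ => h x)
  rw [h2]
  congr 1
  have h3 := Finset.map_univ_equiv (σ : Fin n ≃ Fin n)
  calc Multiset.map σ Finset.univ.val = (Finset.univ.map σ.toEmbedding).val := rfl
    _ = Finset.univ.val := by rw [h3]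

lemma sorted_unique {n : ℕ} (f g : Fin n → ℕ)
    (hf : ∀ i j : Fin n, i ≤ j → f j ≤ f i) (hg : ∀ i j : Fin n, i ≤ j → g j ≤ g i)
    (h : Multiset.map f Finset.univ.val = Multiset.map g Finset.univ.val) : f = g := by
  have huniv : (Finset.univ.val : Multiset (Fin n)) = ↑(List.finRange n) := by
    simp [Fin.univ_def]
  rw [huniv] at h
  have hperm : (List.ofFn f).Perm (List.ofFn g) := by
    rw [← Multiset.coe_eq_coe, List.ofFn_eq_map, List.ofFn_eq_map]
    simpa using h
  have hs : ∀ (k : Fin n → ℕ), (∀ i j : Fin n, i ≤ j → k j ≤ k i) →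
      List.Pairwise (· ≥ ·) (List.ofFn k) := by
    intro k hk
    rw [List.pairwise_ofFn]
    intro i j hij
    exact hk i j hij.le
  exact List.ofFn_injective (List.Perm.eq_of_pairwise' (hs f hf) (hs g hg) hperm)

lemma initial_seg {n : ℕ} (S : Finset (Fin n))
    (hS : ∀ i j : Fin n, i ≤ j → j ∈ S → i ∈ S) (i : Fin n) :
    i ∈ S ↔ (i : ℕ) < S.card := by
  constructor
  · intro hi
    have hsub : Finset.Iic i ⊆ S := fun j hj => hS j i (Finset.mem_Iic.1 hj) hi
    have := Finset.card_le_card hsub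
    rw [Fin.card_Iic] at this
    omega
  · intro hi
    by_contra hmem
    have hsub : S ⊆ Finset.Iio i := by
      intro j hj
      rw [Finset.mem_Iio]
      by_contra hle
      push_neg at hle
      exact hmem (hS i j hle hj)
    have := Finset.card_le_card hsub
    rw [Fin.card_Iio] at this
    omega

lemma card_filter_eq_of_map_eq {n : ℕ} (f g : Fin n → ℕ)
    (h : Multiset.map f Finset.univ.val = Multiset.map g Finset.univ.val)
    (p : ℕ → Prop) [DecidablePred p] :
    (Finset.univ.filter fun i => p (f i)).card = (Finset.univ.filter fun i => p (g i)).card := by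
  have h2 := congrArg (Multiset.countP p) h
  rw [Multiset.countP_map, Multiset.countP_map] at h2
  simpa [Finset.card, Finset.filter_val] using h2

lemma card_filter_lt_fin (n m : ℕ) (h : m ≤ n) :
    (Finset.univ.filter (fun i : Fin n => (i:ℕ) < m)).card = m := by
  have himg : Finset.image Fin.val (Finset.univ.filter (fun i : Fin n => (i:ℕ) < m))
      = Finset.range m := by
    ext a
    simp only [Finset.mem_image, Finset.mem_filter, Finset.mem_univ, true_and, Finset.mem_range]
    constructor
    · rintro ⟨i, hi, rfl⟩; exact hi
    · intro ha; exact ⟨⟨a, by omega⟩, ha, rfl⟩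
  have h2 := Finset.card_image_of_injective
    (Finset.univ.filter (fun i : Fin n => (i:ℕ) < m)) Fin.val_injective
  rw [himg, Finset.card_range] at h2
  omega

lemma map_univ_val_perm {n : ℕ} (e : Equiv.Perm (Fin n)) :
    Multiset.map e Finset.univ.val = Finset.univ.val := by
  have h := Finset.map_univ_equiv (e : Fin n ≃ Fin n)
  calc Multiset.map e Finset.univ.val = (Finset.univ.map e.toEmbedding).val := rfl
    _ = Finset.univ.val := by rw [h]

lemma star_multiset (n m : ℕ) (lam lstar : Fin n → ℕ)
    (h1 : 1 ≤ m) (h2 : m ≤ n)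
    (hstar : ∀ i : Fin n, lstar i =
      if (i : ℕ) = 0 then lam ⟨m - 1, Nat.lt_of_lt_of_le (Nat.sub_lt h1 Nat.one_pos) h2⟩ - 1
      else if (i : ℕ) < m then
        lam ⟨(i : ℕ) - 1, lt_of_le_of_lt (Nat.sub_le _ _) i.isLt⟩
      else 0)
    (hzero : ∀ i : Fin n, m ≤ (i : ℕ) → lam i = 0) :
    ∃ s : Multiset ℕ,
      Multiset.map lam Finset.univ.val = lam ⟨m - 1, Nat.lt_of_lt_of_le (Nat.sub_lt h1 Nat.one_pos) h2⟩ ::ₘ s ∧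
      Multiset.map lstar Finset.univ.val = (lam ⟨m - 1, Nat.lt_of_lt_of_le (Nat.sub_lt h1 Nat.one_pos) h2⟩ - 1) ::ₘ s := by
  set midx : Fin n := ⟨m - 1, Nat.lt_of_lt_of_le (Nat.sub_lt h1 Nat.one_pos) h2⟩ with hmidx
  set zidx : Fin n := ⟨0, by omega⟩ with hzidx
  set ρ : Equiv.Perm (Fin n) :=
    { toFun := fun i => if (i : ℕ) = 0 then midx
        else if (i : ℕ) < m then ⟨(i : ℕ) - 1, lt_of_le_of_lt (Nat.sub_le _ _) i.isLt⟩
        else i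
      invFun := fun i => if (i : ℕ) = m - 1 then zidx
        else if h : (i : ℕ) + 1 < m then ⟨(i : ℕ) + 1, by omega⟩
        else i
      left_inv := by
        intro i
        by_cases hi0 : (i : ℕ) = 0
        · apply Fin.ext
          simp [hi0, hmidx, hzidx]
        · by_cases him : (i : ℕ) < m
          · apply Fin.ext
            have : ¬ ((i:ℕ) - 1 = m - 1) := by omega
            simp only [hi0, if_false, him, if_true]
            simp only [this, if_false]
            have h2' : (i:ℕ) - 1 + 1 < m := by omega
            simp [h2']
            omega
          · apply Fin.ext
            have h3 : ¬ ((i:ℕ) = m - 1) := by omega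
            have h4 : ¬ ((i:ℕ) + 1 < m) := by omega
            simp [hi0, him, h3, h4]
      right_inv := by
        intro i
        by_cases hi0 : (i : ℕ) = m - 1
        · apply Fin.ext
          simp [hi0, hmidx, hzidx]
        · by_cases him : (i : ℕ) + 1 < m
          · apply Fin.ext
            have h3 : ¬ ((i:ℕ) + 1 = 0) := by omega
            simp only [hi0, if_false, dif_pos him]
            simp [h3, him, Nat.lt_of_succ_lt him]
          · apply Fin.ext
            have h3 : ¬ ((i:ℕ) = 0) := by omega
            have h4 : ¬ ((i:ℕ) < m) := by omega
            simp [hi0, him, h3, h4] } with hρ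
  have hρz : ρ zidx = midx := by simp [hρ, hzidx]
  have hρval : ∀ i : Fin n, i ≠ zidx → lstar i = lam (ρ i) := by
    intro i hi
    have hi0 : (i : ℕ) ≠ 0 := by
      intro h; exact hi (Fin.ext h)
    rw [hstar i]
    by_cases him : (i : ℕ) < m
    · simp [hρ, hi0, him]
    · have : lam i = 0 := hzero i (by omega)
      simp [hρ, hi0, him, this]
  refine ⟨Multiset.map lam (Finset.univ.val.erase midx), ?_, ?_⟩
  · conv_lhs => rw [← Multiset.cons_erase (Finset.mem_univ_val midx)]
    rw [Multiset.map_cons]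
  · have huniv : (Finset.univ.val : Multiset (Fin n)) = zidx ::ₘ Finset.univ.val.erase zidx :=
      (Multiset.cons_erase (Finset.mem_univ zidx : zidx ∈ Finset.univ.val)).symm
    conv_lhs => rw [huniv]
    rw [Multiset.map_cons]
    have h0 : lstar zidx = lam midx - 1 := by rw [hstar zidx]; simp [hzidx]
    rw [h0]
    congr 1
    have hcongr : Multiset.map lstar (Finset.univ.val.erase zidx) =
        Multiset.map (fun i => lam (ρ i)) (Finset.univ.val.erase zidx) := by
      apply Multiset.map_congr rfl
      intro x hx
      have hxne : x ≠ zidx := by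
        intro h; subst h
        exact (Multiset.Nodup.notMem_erase Finset.univ.nodup) hx
      exact hρval x hxne
    rw [hcongr]
    have hmm : Multiset.map (fun i => lam (ρ i)) (Finset.univ.val.erase zidx) =
        Multiset.map lam (Multiset.map ρ (Finset.univ.val.erase zidx)) := by
      rw [Multiset.map_map]; rfl
    rw [hmm, Multiset.map_erase _ ρ.injective, hρz, map_univ_val_perm]

/-- For a nonzero composition `λ ∈ ℕⁿ` with length `m = l(λ)` (1-based largest
index of a nonzero entry) and `λ* = (λ_m - 1, λ₁, …, λ_{m-1}, 0, …, 0)`,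
setting `A(ν) = Σᵢ C(νᵢ+1, 2)` and `B(ν) = Σᵢ i·νᵢ⁺` (with `ν⁺` the weakly
decreasing rearrangement of `ν`), one has `|λ| = |λ*| + 1`,
`A(λ) = A(λ*) + λ_m` and `B(λ) = B(λ*) + (m + 1 - a)` where
`a = 1 + #{i ∈ {1,…,m} : λᵢ < λ_m}`. -/
theorem star_recursion_A_B (n m : ℕ) (lam lstar : Fin n → ℕ)
    (h1 : 1 ≤ m) (h2 : m ≤ n)
    (hlast : lam ⟨m - 1, by omega⟩ ≠ 0)
    (hzero : ∀ i : Fin n, m ≤ (i : ℕ) → lam i = 0)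
    (hstar : ∀ i : Fin n, lstar i =
      if (i : ℕ) = 0 then lam ⟨m - 1, by omega⟩ - 1
      else if (i : ℕ) < m then
        lam ⟨(i : ℕ) - 1, lt_of_le_of_lt (Nat.sub_le _ _) i.isLt⟩
      else 0) :
    ((∑ i, lam i) = (∑ i, lstar i) + 1) ∧
    ((∑ i, Nat.choose (lam i + 1) 2) =
      (∑ i, Nat.choose (lstar i + 1) 2) + lam ⟨m - 1, by omega⟩) ∧
    (∀ mu mustar : Fin n → ℕ,
      (∃ σ : Equiv.Perm (Fin n), ∀ i, mu i = lam (σ i)) →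
      (∀ i j : Fin n, i ≤ j → mu j ≤ mu i) →
      (∃ σ : Equiv.Perm (Fin n), ∀ i, mustar i = lstar (σ i)) →
      (∀ i j : Fin n, i ≤ j → mustar j ≤ mustar i) →
      (∑ i : Fin n, ((i : ℕ) + 1) * mu i) =
        (∑ i : Fin n, ((i : ℕ) + 1) * mustar i) +
          (m + 1 - (1 + (Finset.univ.filter (fun i : Fin n =>
            (i : ℕ) < m ∧ lam i < lam ⟨m - 1, by omega⟩)).card))) := by
  obtain ⟨s, hs1, hs2⟩ := star_multiset n m lam lstar h1 h2 hstar hzero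
  set midx : Fin n := ⟨m - 1, by omega⟩ with hmidx
  set c : ℕ := lam midx with hcdef
  have hc1 : 1 ≤ c := Nat.pos_of_ne_zero hlast
  -- generic sum decomposition
  have key : ∀ (F : ℕ → ℕ),
      (∑ i, F (lam i)) = F c + (Multiset.map F s).sum ∧
      (∑ i, F (lstar i)) = F (c - 1) + (Multiset.map F s).sum := by
    intro F
    constructor
    · rw [Finset.sum_eq_multiset_sum]
      have : Multiset.map (fun i => F (lam i)) Finset.univ.val
          = Multiset.map F (Multiset.map lam Finset.univ.val) := by
        rw [Multiset.map_map]; rfl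
      rw [this, hs1, Multiset.map_cons, Multiset.sum_cons]
    · rw [Finset.sum_eq_multiset_sum]
      have : Multiset.map (fun i => F (lstar i)) Finset.univ.val
          = Multiset.map F (Multiset.map lstar Finset.univ.val) := by
        rw [Multiset.map_map]; rfl
      rw [this, hs2, Multiset.map_cons, Multiset.sum_cons]
  refine ⟨?_, ?_, ?_⟩
  · obtain ⟨e1, e2⟩ := key id
    have e1' : (∑ i, lam i) = c + (Multiset.map id s).sum := e1
    have e2' : (∑ i, lstar i) = (c - 1) + (Multiset.map id s).sum := e2
    rw [e1', e2']
    omega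
  · obtain ⟨e1, e2⟩ := key (fun v => Nat.choose (v + 1) 2)
    have e1' : (∑ i, Nat.choose (lam i + 1) 2)
        = Nat.choose (c + 1) 2 + (Multiset.map (fun v => Nat.choose (v + 1) 2) s).sum := e1
    have e2' : (∑ i, Nat.choose (lstar i + 1) 2)
        = Nat.choose (c - 1 + 1) 2 + (Multiset.map (fun v => Nat.choose (v + 1) 2) s).sum := e2
    have hch : Nat.choose (c + 1) 2 = c + Nat.choose c 2 := by
      rw [show Nat.choose (c + 1) 2 = Nat.choose c 1 + Nat.choose c 2 from rfl,
        Nat.choose_one_right]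
    have hcm : c - 1 + 1 = c := by omega
    show (∑ i, Nat.choose (lam i + 1) 2) = (∑ i, Nat.choose (lstar i + 1) 2) + c
    rw [e1', e2', hcm, hch]
    omega
  · rintro mu mustar ⟨σ, hσ⟩ hmu ⟨τ, hτ⟩ hmustar
    have hmapmu : Multiset.map mu Finset.univ.val = Multiset.map lam Finset.univ.val :=
      multiset_map_univ_perm lam mu σ hσ
    have hmapmustar : Multiset.map mustar Finset.univ.val
        = Multiset.map lstar Finset.univ.val :=
      multiset_map_univ_perm lstar mustar τ hτ
    set t : ℕ := (Finset.univ.filter (fun i : Fin n =>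
      (i : ℕ) < m ∧ lam i < c)).card with htdef
    have htm : t < m := by
      have hss : (Finset.univ.filter (fun i : Fin n => (i : ℕ) < m ∧ lam i < c))
          ⊂ (Finset.univ.filter (fun i : Fin n => (i : ℕ) < m)) := by
        constructor
        · intro x hx
          simp only [Finset.mem_filter, Finset.mem_univ, true_and] at hx ⊢
          exact hx.1
        · intro hsub
          have hmem : midx ∈ Finset.univ.filter (fun i : Fin n => (i : ℕ) < m) := by
            simp only [Finset.mem_filter, Finset.mem_univ, true_and, hmidx]
            omega
          have := hsub hmem
          simp only [Finset.mem_filter, Finset.mem_univ, true_and] at this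
          omega
      have := Finset.card_lt_card hss
      rw [card_filter_lt_fin n m h2] at this
      omega
    set k : ℕ := m - t with hkdef
    have hk1 : 1 ≤ k := by omega
    have hcardlam : (Finset.univ.filter (fun i : Fin n => c ≤ lam i)).card = k := by
      have hset : (Finset.univ.filter (fun i : Fin n => c ≤ lam i))
          = (Finset.univ.filter (fun i : Fin n => (i : ℕ) < m)) \
            (Finset.univ.filter (fun i : Fin n => (i : ℕ) < m ∧ lam i < c)) := by
        ext i
        simp only [Finset.mem_sdiff, Finset.mem_filter, Finset.mem_univ, true_and]
        constructor
        · intro hi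
          have him : (i : ℕ) < m := by
            by_contra hx
            have := hzero i (by omega)
            omega
          exact ⟨him, by omega⟩
        · rintro ⟨him, hnot⟩
          by_contra hx
          exact hnot ⟨him, by omega⟩
      rw [hset, Finset.card_sdiff_of_subset]
      · rw [card_filter_lt_fin n m h2]
      · intro x hx
        simp only [Finset.mem_filter, Finset.mem_univ, true_and] at hx ⊢
        exact hx.1
    have hcardmu : (Finset.univ.filter (fun i : Fin n => c ≤ mu i)).card = k := by
      rw [card_filter_eq_of_map_eq mu lam hmapmu (fun v => c ≤ v)]
      exact hcardlam
    have hmu_iff : ∀ i : Fin n, c ≤ mu i ↔ (i : ℕ) < k := by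
      intro i
      have hdc : ∀ i j : Fin n, i ≤ j →
          j ∈ Finset.univ.filter (fun i : Fin n => c ≤ mu i) →
          i ∈ Finset.univ.filter (fun i : Fin n => c ≤ mu i) := by
        intro i j hij hj
        simp only [Finset.mem_filter, Finset.mem_univ, true_and] at hj ⊢
        exact le_trans hj (hmu i j hij)
      have := initial_seg _ hdc i
      rw [hcardmu] at this
      simpa using this
    have hkn : k - 1 < n := by omega
    set kidx : Fin n := ⟨k - 1, hkn⟩ with hkidx
    have hkidxval : (kidx : ℕ) = k - 1 := rfl
    have hmukidx : mu kidx = c := by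
      have hcmem : c ∈ Multiset.map mu Finset.univ.val := by
        rw [hmapmu, hs1]; exact Multiset.mem_cons_self _ _
      obtain ⟨j, _, hj⟩ := Multiset.mem_map.1 hcmem
      have hjk : (j : ℕ) < k := (hmu_iff j).1 (le_of_eq hj.symm)
      have hle : mu kidx ≤ mu j :=
        hmu j kidx (Fin.le_def.2 (by rw [hkidxval]; omega))
      have hge : c ≤ mu kidx := (hmu_iff kidx).2 (by rw [hkidxval]; omega)
      omega
    set nu : Fin n → ℕ := fun i => if i = kidx then c - 1 else mu i with hnudef
    have hnusort : ∀ i j : Fin n, i ≤ j → nu j ≤ nu i := by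
      intro i j hij
      by_cases hi : i = kidx <;> by_cases hj : j = kidx
      · subst hi; subst hj; rfl
      · subst hi
        simp only [hnudef, if_pos rfl, if_neg hj]
        have hjk : ¬ ((j : ℕ) < k) := by
          have hkj : (kidx : ℕ) ≤ (j : ℕ) := Fin.le_def.1 hij
          rw [hkidxval] at hkj
          intro hx
          apply hj
          apply Fin.ext
          rw [hkidxval]
          omega
        have hjc : ¬ (c ≤ mu j) := (hmu_iff j).not.2 hjk
        omega
      · subst hj
        simp only [hnudef, if_pos rfl, if_neg hi]
        have : (i : ℕ) < k := by
          have h' : (i : ℕ) ≤ (kidx : ℕ) := Fin.le_def.1 hij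
          rw [hkidxval] at h'
          omega
        have := (hmu_iff i).2 this
        omega
      · simp only [hnudef, if_neg hi, if_neg hj]
        exact hmu i j hij
    have hmapnu : Multiset.map mustar Finset.univ.val = Multiset.map nu Finset.univ.val := by
      have hEmu : Multiset.map mu Finset.univ.val
          = c ::ₘ Multiset.map mu (Finset.univ.val.erase kidx) := by
        conv_lhs => rw [← Multiset.cons_erase (Finset.mem_univ_val kidx)]
        rw [Multiset.map_cons, hmukidx]
      have hEnu : Multiset.map nu Finset.univ.val
          = (c - 1) ::ₘ Multiset.map mu (Finset.univ.val.erase kidx) := by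
        conv_lhs => rw [← Multiset.cons_erase (Finset.mem_univ_val kidx)]
        rw [Multiset.map_cons]
        have : nu kidx = c - 1 := by simp [hnudef]
        rw [this]
        congr 1
        apply Multiset.map_congr rfl
        intro x hx
        have hxne : x ≠ kidx := by
          intro h; subst h
          exact (Multiset.Nodup.notMem_erase Finset.univ.nodup) hx
        simp [hnudef, hxne]
      apply (Multiset.cons_inj_right c).1
      calc c ::ₘ Multiset.map mustar Finset.univ.val
          = c ::ₘ (c - 1) ::ₘ s := by rw [hmapmustar, hs2]
        _ = (c - 1) ::ₘ c ::ₘ s := Multiset.cons_swap _ _ _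
        _ = (c - 1) ::ₘ Multiset.map mu Finset.univ.val := by rw [hmapmu, hs1]
        _ = (c - 1) ::ₘ c ::ₘ Multiset.map mu (Finset.univ.val.erase kidx) := by rw [hEmu]
        _ = c ::ₘ (c - 1) ::ₘ Multiset.map mu (Finset.univ.val.erase kidx) :=
            Multiset.cons_swap _ _ _
        _ = c ::ₘ Multiset.map nu Finset.univ.val := by rw [hEnu]
    have hmueq : mustar = nu := sorted_unique mustar nu hmustar hnusort hmapnu
    have hgoalk : m + 1 - (1 + t) = k := by omega
    rw [hgoalk, hmueq]
    have hA : (∑ i : Fin n, ((i : ℕ) + 1) * mu i)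
        = (∑ i ∈ Finset.univ.erase kidx, ((i : ℕ) + 1) * mu i) + ((kidx : ℕ) + 1) * mu kidx :=
      (Finset.sum_erase_add Finset.univ _ (Finset.mem_univ kidx)).symm
    have hB : (∑ i : Fin n, ((i : ℕ) + 1) * nu i)
        = (∑ i ∈ Finset.univ.erase kidx, ((i : ℕ) + 1) * nu i) + ((kidx : ℕ) + 1) * nu kidx :=
      (Finset.sum_erase_add Finset.univ _ (Finset.mem_univ kidx)).symm
    have hEq : (∑ i ∈ Finset.univ.erase kidx, ((i : ℕ) + 1) * mu i)
        = (∑ i ∈ Finset.univ.erase kidx, ((i : ℕ) + 1) * nu i) := by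
      apply Finset.sum_congr rfl
      intro x hx
      have hxne : x ≠ kidx := (Finset.mem_erase.1 hx).1
      simp [hnudef, hxne]
    have hkval : ((kidx : ℕ) + 1) = k := by
      show k - 1 + 1 = k
      omega
    have htermmu : ((kidx : ℕ) + 1) * mu kidx = k * c := by
      rw [hmukidx, hkval]
    have htermnu : ((kidx : ℕ) + 1) * nu kidx = k * (c - 1) := by
      have hnuk : nu kidx = c - 1 := by simp [hnudef]
      rw [hnuk, hkval]
    have hkc : k * c = k * (c - 1) + k := by
      have h' : k * (c - 1 + 1) = k * (c - 1) + k * 1 := mul_add _ _ _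
      rw [Nat.sub_add_cancel hc1] at h'
      simpa using h'
    rw [hA, hB, htermmu, htermnu, hEq, hkc]
    ring
end
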